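/- arXiv:1809.09582 — 6 statements merged into one kernel-verified Lean document; each statement's English description precedes it below -/
import Mathlib

section
/- In the setting of contextual bandits with cross-learning with stochastic rewards and an adversarially fixed context sequence, suppose Δ* > 0 is such that Δ_i(c) ≥ Δ* for every pair (i, c) with μ_i(c) < μ*(c). Then there is a universal constant C₀ > 0 such that for all T ≥ max(K, 2), the UCB1.CL algorithm satisfies E[Reg] ≤ C₀ · K · log T / Δ*, where Reg = Σ_{t=1}^T Δ_{I_t}(c_t). -/
/-!
Since rewards are read off a fixed table, the pull at round `t` is a measurable function of the
rewards of earlier rounds. Hence for an arm `i`, a count `n` and a context `c`, the centred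
rewards of the first `n` pulls of `i` form a transform of independent `[0, 1]`-valued increments by
predictable indicators; by Hoeffding's lemma and a supermartingale argument the sum is
sub-Gaussian with variance proxy `n / 4`. Cross-learning means that one pull count `τ_i` serves
every context, so a union bound over arms, counts and the contexts of the rounds before `T` shows
that, outside an event of probability at most `2K / T²`, every empirical mean `σ_i / τ_i` lies
within `√(2 log T / τ_i)` of its mean.

On that event optimism gives `Δ_{I_t}(c_t) ≤ 2 √(2 log T / τ_{I_t})`. A positive gap is at least
`Δ*`, which forces `τ_{I_t} ≤ 8 log T / Δ*²`; as the pull counts of one arm at its successive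
pulls are distinct, summing `1 / √τ` over them costs at most `16 log T / Δ*` per arm. Every gap is
at most `1 / Δ*`, which pays for the first `K` rounds and for the exceptional event.
-/

open MeasureTheory ProbabilityTheory Finset

/-- Number of pulls of arm `i` among rounds `0, …, t-1` (i.e. `τ_{i,t-1}` in the paper's
1-indexed notation). -/
noncomputable def tauCL {K : ℕ} (I : ℕ → Fin K) (i : Fin K) (t : ℕ) : ℕ :=
  ((Finset.range t).filter (fun s => I s = i)).card

/-- Cross-learned cumulative reward of arm `i` at context `c` over the rounds `s < t`
in which arm `i` was pulled (i.e. `σ_{i,t-1}(c)`). -/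
noncomputable def sigCL {K C : ℕ} (r : Fin K → ℕ → Fin C → ℝ) (I : ℕ → Fin K)
    (i : Fin K) (t : ℕ) (c : Fin C) : ℝ :=
  ∑ s ∈ (Finset.range t).filter (fun s => I s = i), r i s c

noncomputable def scoreCL {K C : ℕ} (T : ℕ) (r : Fin K → ℕ → Fin C → ℝ) (I : ℕ → Fin K)
    (t : ℕ) (c : Fin C) (i : Fin K) : ℝ :=
  sigCL r I i t c / (tauCL I i t : ℝ) + Real.sqrt (2 * Real.log T / (tauCL I i t : ℝ))

open Real
open scoped NNReal

namespace ProbabilityTheory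

variable {Ω : Type*} {mΩ : MeasurableSpace Ω} {μ : Measure Ω}

lemma HasSubgaussianMGF.measureReal_abs_ge_le {X : Ω → ℝ} {c : ℝ≥0}
    (h : HasSubgaussianMGF X c μ) {ε : ℝ} (hε : 0 ≤ ε) :
    μ.real {ω | ε ≤ |X ω|} ≤ 2 * exp (-ε ^ 2 / (2 * c)) := by
  have hsplit : {ω | ε ≤ |X ω|} = {ω | ε ≤ X ω} ∪ {ω | ε ≤ (-X) ω} := by
    ext ω; simp [le_abs]
  rw [hsplit, two_mul]
  exact (measureReal_union_le _ _).trans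
    (add_le_add (h.measure_ge_le hε) (h.neg.measure_ge_le hε))

noncomputable def indicatorSum (E : ℕ → Set Ω) (X : ℕ → Ω → ℝ) (t : ℕ) (ω : Ω) : ℝ :=
  ∑ s ∈ range t, (E s).indicator (X s) ω

lemma indicatorSum_succ (E : ℕ → Set Ω) (X : ℕ → Ω → ℝ) (t : ℕ) (ω : Ω) :
    indicatorSum E X (t + 1) ω = indicatorSum E X t ω + (E t).indicator (X t) ω :=
  sum_range_succ _ _

lemma integral_mem_Icc_zero_one [IsProbabilityMeasure μ] {f : Ω → ℝ}
    (hf : ∀ ω, f ω ∈ Set.Icc 0 1) : ∫ ω, f ω ∂μ ∈ Set.Icc 0 1 :=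
  ⟨integral_nonneg fun ω => (hf ω).1, by
    simpa using integral_mono_of_nonneg (μ := μ) (ae_of_all _ fun ω => (hf ω).1)
      (integrable_const (1 : ℝ)) (ae_of_all _ fun ω => (hf ω).2)⟩

lemma integral_le_add_mul_measureReal [IsProbabilityMeasure μ] {f : Ω → ℝ} {B : Set Ω} {a b : ℝ}
    (hf : 0 ≤ f) (ha : 0 ≤ a) (hgood : ∀ ω ∉ B, f ω ≤ a) (hbad : ∀ ω, f ω ≤ b) :
    ∫ ω, f ω ∂μ ≤ a + b * μ.real B := by
  -- `B` need not be measurable: compare with the indicator of its measurable hull.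
  have hB := measurableSet_toMeasurable μ B
  have hpt : ∀ ω, f ω ≤ a + (toMeasurable μ B).indicator (fun _ => b) ω := by
    intro ω
    by_cases hω : ω ∈ toMeasurable μ B
    · rw [Set.indicator_of_mem hω]; linarith [hbad ω]
    · rw [Set.indicator_of_notMem hω, add_zero]
      exact hgood ω fun h => hω (subset_toMeasurable μ B h)
  calc ∫ ω, f ω ∂μ ≤ ∫ ω, a + (toMeasurable μ B).indicator (fun _ => b) ω ∂μ :=
        integral_mono_of_nonneg (ae_of_all _ hf)
          ((integrable_const a).add ((integrable_const b).indicator hB)) (ae_of_all _ hpt)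
    _ = a + b * μ.real B := by
      rw [integral_add (integrable_const a) ((integrable_const b).indicator hB),
        integral_indicator_const b hB, integral_const, probReal_univ, one_smul, smul_eq_mul,
        measureReal_def, measure_toMeasurable, ← measureReal_def, mul_comm]

lemma integrable_mul_exp_indicator_and_integral_le [IsProbabilityMeasure μ] {c : ℝ≥0}
    {m : MeasurableSpace Ω} (hm : m ≤ mΩ) {Z X : Ω → ℝ} {A : Set Ω} (hZ : Measurable[m] Z)
    (hZint : Integrable Z μ) (hZ0 : 0 ≤ Z)
    (hA : MeasurableSet[m] A) (hind : Indep m (MeasurableSpace.comap X inferInstance) μ)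
    (hsub : HasSubgaussianMGF X c μ) (l : ℝ) :
    Integrable (fun ω => Z ω * exp (A.indicator (fun ω => l * X ω - c * l ^ 2 / 2) ω)) μ ∧
      ∫ ω, Z ω * exp (A.indicator (fun ω => l * X ω - c * l ^ 2 / 2) ω) ∂μ ≤ ∫ ω, Z ω ∂μ := by
  -- On `A` the factor is `1 + Y`; `Y` is independent of `1_A Z` and has nonpositive mean.
  set Y : Ω → ℝ := fun ω => exp (-(c * l ^ 2 / 2)) * exp (l * X ω) - 1
  have hsplit : ∀ ω, Z ω * exp (A.indicator (fun ω => l * X ω - c * l ^ 2 / 2) ω)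
      = Z ω + (A.indicator Z * Y) ω := by
    intro ω
    by_cases hω : ω ∈ A
    · simp only [Pi.mul_apply, Set.indicator_of_mem hω, Y]
      rw [mul_sub, mul_one, ← exp_add]; ring_nf
    · simp [Set.indicator_of_notMem hω]
  have hindep : IndepFun (A.indicator Z) Y μ := by
    rw [IndepFun_iff_Indep]
    refine indep_of_indep_of_le_right (indep_of_indep_of_le_left hind (hZ.indicator hA).comap_le) ?_
    exact (((measurable_id.const_mul l).exp.const_mul _).sub_const 1).comp
      (comap_measurable X) |>.comap_le
  have hAZ : Integrable (A.indicator Z) μ := hZint.indicator (hm _ hA)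
  have hYint : Integrable Y μ := ((hsub.integrable_exp_mul l).const_mul _).sub (integrable_const 1)
  have hY : ∫ ω, Y ω ∂μ ≤ 0 := by
    rw [integral_sub ((hsub.integrable_exp_mul l).const_mul _) (integrable_const 1),
      integral_const_mul, integral_const, probReal_univ, one_smul, sub_nonpos]
    calc exp (-(c * l ^ 2 / 2)) * ∫ ω, exp (l * X ω) ∂μ
        ≤ exp (-(c * l ^ 2 / 2)) * exp (c * l ^ 2 / 2) := by gcongr; exact hsub.mgf_le l
      _ = 1 := by rw [← exp_add, neg_add_cancel, exp_zero]
  have hprod : Integrable (A.indicator Z * Y) μ := hindep.integrable_mul hAZ hYint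
  simp_rw [hsplit]
  refine ⟨hZint.add hprod, ?_⟩
  rw [integral_add hZint hprod, hindep.integral_mul_eq_mul_integral hAZ.aestronglyMeasurable
    hYint.aestronglyMeasurable]
  have hAZ0 : 0 ≤ ∫ ω, A.indicator Z ω ∂μ := integral_nonneg (Set.indicator_nonneg fun ω _ => hZ0 ω)
  exact add_le_of_nonpos_right (mul_nonpos_of_nonneg_of_nonpos hAZ0 hY)

section Predictable

variable (ℱ : Filtration ℕ mΩ) {E : ℕ → Set Ω} {X : ℕ → Ω → ℝ} {t : ℕ}

lemma measurable_indicatorSum (hX : ∀ s < t, Measurable[ℱ (s + 1)] (X s))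
    (hE : ∀ s < t, MeasurableSet[ℱ s] (E s)) : Measurable[ℱ t] (indicatorSum E X t) := by
  refine Finset.measurable_sum _ fun s hs => ?_
  have hst := mem_range.1 hs
  exact ((hX s hst).mono (ℱ.mono hst) le_rfl).indicator ((ℱ.mono hst.le) _ (hE s hst))

variable [IsProbabilityMeasure μ] {c : ℝ≥0}

lemma integrable_exp_indicatorSum_and_integral_le_one
    (hX : ∀ s < t, Measurable[ℱ (s + 1)] (X s)) (hE : ∀ s < t, MeasurableSet[ℱ s] (E s))
    (hind : ∀ s < t, Indep (ℱ s) (MeasurableSpace.comap (X s) inferInstance) μ)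
    (hsub : ∀ s < t, HasSubgaussianMGF (X s) c μ) (l : ℝ) :
    Integrable (fun ω => exp (l * indicatorSum E X t ω - c * l ^ 2 / 2 * indicatorSum E 1 t ω)) μ ∧
      ∫ ω, exp (l * indicatorSum E X t ω - c * l ^ 2 / 2 * indicatorSum E 1 t ω) ∂μ ≤ 1 := by
  induction t with
  | zero => simp [indicatorSum]
  | succ t ih =>
    have hlt : ∀ s < t, s < t + 1 := fun s hs => hs.trans t.lt_succ_self
    obtain ⟨hZint, hZle⟩ := ih (fun s hs => hX s (hlt s hs)) (fun s hs => hE s (hlt s hs))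
      (fun s hs => hind s (hlt s hs)) (fun s hs => hsub s (hlt s hs))
    have hZ : Measurable[ℱ t] fun ω =>
        exp (l * indicatorSum E X t ω - c * l ^ 2 / 2 * indicatorSum E 1 t ω) := by
      have hS := measurable_indicatorSum ℱ (fun s hs => hX s (hlt s hs))
        (fun s hs => hE s (hlt s hs))
      have hN := measurable_indicatorSum ℱ (X := 1) (fun s _ => measurable_const)
        (fun s hs => hE s (hlt s hs))
      exact ((hS.const_mul l).sub (hN.const_mul _)).exp
    have hstep : ∀ ω,
        exp (l * indicatorSum E X (t + 1) ω - c * l ^ 2 / 2 * indicatorSum E 1 (t + 1) ω) =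
          exp (l * indicatorSum E X t ω - c * l ^ 2 / 2 * indicatorSum E 1 t ω) *
            exp ((E t).indicator (fun ω => l * X t ω - c * l ^ 2 / 2) ω) := by
      intro ω
      rw [← exp_add, indicatorSum_succ, indicatorSum_succ]
      by_cases hω : ω ∈ E t
      · simp only [Set.indicator_of_mem hω, Pi.one_apply]; ring_nf
      · simp [Set.indicator_of_notMem hω]
    obtain ⟨hint, hle⟩ := integrable_mul_exp_indicator_and_integral_le (ℱ.le t) hZ hZint
      (fun ω => (exp_pos _).le) (hE t t.lt_succ_self) (hind t t.lt_succ_self)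
      (hsub t t.lt_succ_self) l
    simp_rw [hstep]
    exact ⟨hint, hle.trans hZle⟩

lemma hasSubgaussianMGF_indicatorSum
    (hX : ∀ s < t, Measurable[ℱ (s + 1)] (X s)) (hE : ∀ s < t, MeasurableSet[ℱ s] (E s))
    (hind : ∀ s < t, Indep (ℱ s) (MeasurableSpace.comap (X s) inferInstance) μ)
    (hsub : ∀ s < t, HasSubgaussianMGF (X s) c μ) {n : ℕ} (hN : ∀ ω, indicatorSum E 1 t ω ≤ n) :
    HasSubgaussianMGF (indicatorSum E X t) (c * n) μ := by
  have hS : Measurable (indicatorSum E X t) :=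
    (measurable_indicatorSum ℱ hX hE).mono (ℱ.le t) le_rfl
  have hsuper := integrable_exp_indicatorSum_and_integral_le_one ℱ hX hE hind hsub
  have hle : ∀ l ω, exp (l * indicatorSum E X t ω) ≤
      exp (l * indicatorSum E X t ω - c * l ^ 2 / 2 * indicatorSum E 1 t ω) *
        exp ((c * n : ℝ≥0) * l ^ 2 / 2) := by
    intro l ω
    rw [← exp_add, exp_le_exp]
    have := mul_le_mul_of_nonneg_left (hN ω) (by positivity : (0:ℝ) ≤ c * l ^ 2 / 2)
    push_cast
    nlinarith
  have hint : ∀ l, Integrable (fun ω => exp (l * indicatorSum E X t ω)) μ := fun l =>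
    ((hsuper l).1.mul_const _).mono' (hS.const_mul l).exp.aestronglyMeasurable
      (ae_of_all _ fun ω => by rw [norm_of_nonneg (exp_pos _).le]; exact hle l ω)
  refine ⟨hint, fun l => ?_⟩
  calc mgf (indicatorSum E X t) μ l
      ≤ ∫ ω, exp (l * indicatorSum E X t ω - c * l ^ 2 / 2 * indicatorSum E 1 t ω) *
          exp ((c * n : ℝ≥0) * l ^ 2 / 2) ∂μ :=
        integral_mono (hint l) ((hsuper l).1.mul_const _) (hle l)
    _ ≤ exp ((c * n : ℝ≥0) * l ^ 2 / 2) := by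
      rw [integral_mul_const]
      exact mul_le_of_le_one_left (exp_pos _).le (hsuper l).2

end Predictable

end ProbabilityTheory

section Deterministic

lemma sum_Icc_inv_sqrt_le (N : ℕ) : ∑ n ∈ Icc 1 N, (√n)⁻¹ ≤ 2 * √N := by
  induction N with
  | zero => simp
  | succ N ih =>
    rw [sum_Icc_succ_top (by omega)]
    have hN1 : (0 : ℝ) < √(N + 1) := sqrt_pos.2 (by positivity)
    have hstep : (√(N + 1))⁻¹ ≤ 2 * √(N + 1) - 2 * √N := by
      rw [inv_le_iff_one_le_mul₀ hN1]
      have hN : √N * √N = N := mul_self_sqrt (Nat.cast_nonneg N)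
      have hN' : √(N + 1) * √(N + 1) = N + 1 := mul_self_sqrt (by positivity)
      nlinarith [sqrt_le_sqrt (by linarith : (N : ℝ) ≤ N + 1), sqrt_nonneg (N : ℝ)]
    push_cast
    linarith

lemma sum_inv_sqrt_le_of_injOn {α : Type*} {s : Finset α} {τ : α → ℕ} (hinj : Set.InjOn τ s)
    {x : ℝ} (hτ : ∀ a ∈ s, 1 ≤ τ a ∧ (τ a : ℝ) ≤ x) : ∑ a ∈ s, (√(τ a))⁻¹ ≤ 2 * √x := by
  have hfloor : 2 * √(⌊x⌋₊ : ℝ) ≤ 2 * √x := by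
    rcases le_or_gt 0 x with hx | hx
    · gcongr; exact Nat.floor_le hx
    · simp [Nat.floor_of_nonpos hx.le]
  calc ∑ a ∈ s, (√(τ a))⁻¹ = ∑ k ∈ s.image τ, (√k)⁻¹ := by rw [sum_image hinj]
    _ ≤ ∑ k ∈ Icc 1 ⌊x⌋₊, (√k)⁻¹ := by
      refine sum_le_sum_of_subset_of_nonneg (image_subset_iff.2 fun a ha => ?_)
        fun _ _ _ => by positivity
      exact mem_Icc.2 ⟨(hτ a ha).1, Nat.le_floor (hτ a ha).2⟩
    _ ≤ 2 * √x := (sum_Icc_inv_sqrt_le _).trans hfloor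

variable {K : ℕ} (J : ℕ → Fin K) (i : Fin K)

lemma tauCL_mono : Monotone (tauCL J i) := fun _ _ h =>
  card_le_card (filter_subset_filter _ (range_subset_range.2 h))

lemma tauCL_le (t : ℕ) : tauCL J i t ≤ t :=
  (card_filter_le _ _).trans (card_range t).le

lemma tauCL_succ_of_eq {s : ℕ} (h : J s = i) : tauCL J i (s + 1) = tauCL J i s + 1 := by
  unfold tauCL
  rw [range_add_one, filter_insert, if_pos h, card_insert_of_notMem (by simp)]

lemma tauCL_lt_tauCL {s t : ℕ} (h : J s = i) (hst : s < t) : tauCL J i s < tauCL J i t := by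
  have := tauCL_mono J i (Nat.succ_le_of_lt hst)
  rw [tauCL_succ_of_eq J i h] at this
  omega

lemma tauCL_injOn : Set.InjOn (tauCL J i) {t | J t = i} := by
  intro s hs t ht hst
  by_contra hne
  rcases lt_or_gt_of_ne hne with h | h
  · exact (tauCL_lt_tauCL J i hs h).ne hst
  · exact (tauCL_lt_tauCL J i ht h).ne' hst

lemma one_le_tauCL {s t : ℕ} (h : J s = i) (hst : s < t) : 1 ≤ tauCL J i t :=
  (Nat.zero_le _).trans_lt (tauCL_lt_tauCL J i h hst)

lemma filter_tauCL_lt_tauCL {t T : ℕ} (htT : t ≤ T) :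
    (range T).filter (fun s => J s = i ∧ tauCL J i s < tauCL J i t)
      = (range t).filter (fun s => J s = i) := by
  ext s
  simp only [mem_filter, mem_range]
  constructor
  · rintro ⟨-, hs, hlt⟩
    exact ⟨lt_of_not_ge fun hts => hlt.not_ge (tauCL_mono J i hts), hs⟩
  · rintro ⟨hst, hs⟩
    exact ⟨hst.trans_le htT, hs, tauCL_lt_tauCL J i hs hst⟩

lemma card_filter_tauCL_lt_le (n T : ℕ) :
    #((range T).filter (fun s => J s = i ∧ tauCL J i s < n)) ≤ n := by
  calc #((range T).filter (fun s => J s = i ∧ tauCL J i s < n)) ≤ #(range n) :=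
        card_le_card_of_injOn (tauCL J i) (fun s hs => by simp_all)
          ((tauCL_injOn J i).mono fun s hs => by simp_all)
    _ = n := card_range n

lemma sum_pulls_le_of_le_sqrt_div_tauCL {s : Finset ℕ} {g : ℕ → ℝ} {ρ Δ : ℝ} (hρ : 0 ≤ ρ)
    (hΔ : 0 < Δ) (h : ∀ t ∈ s, J t = i ∧ 1 ≤ tauCL J i t ∧ Δ ≤ g t ∧ g t ≤ √(ρ / tauCL J i t)) :
    ∑ t ∈ s, g t ≤ 2 * ρ / Δ := by
  have hτ : ∀ t ∈ s, 1 ≤ tauCL J i t ∧ (tauCL J i t : ℝ) ≤ ρ / Δ ^ 2 := by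
    intro t ht
    obtain ⟨-, h1, hΔg, hg⟩ := h t ht
    have hpos : (0 : ℝ) < tauCL J i t := by exact_mod_cast h1
    have hsq : Δ ^ 2 ≤ ρ / tauCL J i t := (le_sqrt' hΔ).1 (hΔg.trans hg)
    refine ⟨h1, ?_⟩
    rw [le_div_iff₀ (by positivity)]
    rw [le_div_iff₀ hpos] at hsq
    linarith
  have hinj : Set.InjOn (tauCL J i) s := (tauCL_injOn J i).mono fun t ht => (h t ht).1
  calc ∑ t ∈ s, g t ≤ ∑ t ∈ s, √ρ * (√(tauCL J i t))⁻¹ := by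
        refine sum_le_sum fun t ht => ?_
        rw [← div_eq_mul_inv, ← sqrt_div hρ]
        exact (h t ht).2.2.2
    _ = √ρ * ∑ t ∈ s, (√(tauCL J i t))⁻¹ := (mul_sum _ _ _).symm
    _ ≤ √ρ * (2 * √(ρ / Δ ^ 2)) := by gcongr; exact sum_inv_sqrt_le_of_injOn hinj hτ
    _ = 2 * ρ / Δ := by
      rw [sqrt_div hρ, sqrt_sq hΔ.le]
      field_simp
      rw [sq_sqrt hρ]

lemma sum_le_card_mul_of_le_sqrt_div_tauCL {s : Finset ℕ} {g : ℕ → ℝ} {ρ Δ : ℝ} (hρ : 0 ≤ ρ)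
    (hΔ : 0 < Δ) (h : ∀ t ∈ s, 1 ≤ tauCL J (J t) t ∧ g t ≤ √(ρ / tauCL J (J t) t) ∧
      (0 < g t → Δ ≤ g t)) :
    ∑ t ∈ s, g t ≤ K * (2 * ρ / Δ) := by
  calc ∑ t ∈ s, g t ≤ ∑ t ∈ s.filter (0 < g ·), g t := by
        rw [← sum_filter_add_sum_filter_not s (0 < g ·)]
        exact add_le_of_nonpos_right (sum_nonpos fun t ht => not_lt.1 (mem_filter.1 ht).2)
    _ = ∑ i, ∑ t ∈ (s.filter (0 < g ·)).filter (J · = i), g t := (sum_fiberwise _ J g).symm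
    _ ≤ ∑ _i : Fin K, 2 * ρ / Δ := by
      refine sum_le_sum fun i _ => sum_pulls_le_of_le_sqrt_div_tauCL J i hρ hΔ fun t ht => ?_
      simp only [mem_filter] at ht
      obtain ⟨⟨hts, hg⟩, rfl⟩ := ht
      obtain ⟨h1, h2, h3⟩ := h t hts
      exact ⟨rfl, h1, h3 hg, h2⟩
    _ = K * (2 * ρ / Δ) := by simp

end Deterministic

section Run

variable {K C : ℕ}

lemma sub_le_two_mul_of_abs_sub_le {ι : Type*} {m est w : ι → ℝ}
    (hconf : ∀ j, |est j - m j| ≤ w j) {a b : ι} (hmax : est b + w b ≤ est a + w a) :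
    m b - m a ≤ 2 * w a := by
  have ha := abs_le.1 (hconf a)
  have hb := abs_le.1 (hconf b)
  linarith [ha.2, hb.1]

lemma gap_nonneg {ι : Type*} [Finite ι] (m : ι → ℝ) (i : ι) : 0 ≤ (⨆ j, m j) - m i :=
  sub_nonneg.2 (le_ciSup (Set.finite_range m).bddAbove i)

lemma gap_le_inv {ι : Type*} [Finite ι] [Nonempty ι] {m : ι → ℝ} (hm : ∀ j, m j ∈ Set.Icc 0 1)
    {Δ : ℝ} (hΔ : 0 < Δ) {i : ι} (hgap : m i < ⨆ j, m j → Δ ≤ (⨆ j, m j) - m i) :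
    (⨆ j, m j) - m i ≤ Δ⁻¹ := by
  rcases (gap_nonneg m i).eq_or_lt with h | h
  · rw [← h]; positivity
  · have hle : (⨆ j, m j) - m i ≤ 1 := by
      linarith [ciSup_le fun j => (hm j).2, (hm i).1]
    have := hgap (sub_pos.1 h)
    exact hle.trans ((one_le_inv₀ hΔ).2 (by linarith))

/-- Taking the least element of the set of maximisers breaks ties by least index. -/
structure IsUCB1CLRun (T : ℕ) (ctx : ℕ → Fin C) (ρ : Fin K → ℕ → Fin C → ℝ) (J : ℕ → Fin K) :
    Prop where
  initial : ∀ t (ht : t < K), J t = ⟨t, ht⟩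
  isLeast : ∀ t, K ≤ t → t < T →
    IsLeast {j | ∀ j', scoreCL T ρ J t (ctx t) j' ≤ scoreCL T ρ J t (ctx t) j} (J t)

namespace IsUCB1CLRun

variable {T : ℕ} {ctx : ℕ → Fin C} {ρ : Fin K → ℕ → Fin C → ℝ} {J : ℕ → Fin K}

lemma one_le_tauCL (hJ : IsUCB1CLRun T ctx ρ J) (j : Fin K) {t : ℕ} (ht : K ≤ t) :
    1 ≤ tauCL J j t :=
  _root_.one_le_tauCL J j (s := j) (by rw [hJ.initial j j.isLt]) (j.isLt.trans_le ht)

lemma gap_le (hJ : IsUCB1CLRun T ctx ρ J) (m : Fin K → Fin C → ℝ) {t : ℕ} (hKt : K ≤ t)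
    (htT : t < T) (hconf : ∀ j, |sigCL ρ J j t (ctx t) - tauCL J j t * m j (ctx t)| ≤
      tauCL J j t * √(2 * Real.log T / tauCL J j t)) :
    (⨆ j, m j (ctx t)) - m (J t) (ctx t) ≤ √(8 * Real.log T / tauCL J (J t) t) := by
  have : Nonempty (Fin K) := ⟨J t⟩
  obtain ⟨b, hb⟩ := exists_eq_ciSup_of_finite (f := fun j => m j (ctx t))
  have hest : ∀ j, |sigCL ρ J j t (ctx t) / tauCL J j t - m j (ctx t)| ≤
      √(2 * Real.log T / tauCL J j t) := by
    intro j
    have hpos : (0 : ℝ) < tauCL J j t := by exact_mod_cast hJ.one_le_tauCL j hKt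
    rw [div_sub' hpos.ne', abs_div, abs_of_pos hpos, div_le_iff₀ hpos]
    rw [mul_comm (√_)]
    exact hconf j
  have hopt := sub_le_two_mul_of_abs_sub_le hest ((hJ.isLeast t hKt htT).1 b)
  rw [← hb]
  calc m b (ctx t) - m (J t) (ctx t) ≤ 2 * √(2 * Real.log T / tauCL J (J t) t) := hopt
    _ = √(8 * Real.log T / tauCL J (J t) t) := by
      rw [show 8 * Real.log T / tauCL J (J t) t = 2 ^ 2 * (2 * Real.log T / tauCL J (J t) t) by
        ring, sqrt_mul (by norm_num), sqrt_sq (by norm_num)]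

lemma regret_le (hJ : IsUCB1CLRun T ctx ρ J) (hKT : K ≤ T) {m : Fin K → Fin C → ℝ}
    (hm : ∀ i c, m i c ∈ Set.Icc 0 1) {Δ : ℝ} (hΔ : 0 < Δ)
    (hgap : ∀ i c, m i c < (⨆ j, m j c) → Δ ≤ (⨆ j, m j c) - m i c)
    (hconf : ∀ j t, K ≤ t → t < T → |sigCL ρ J j t (ctx t) - tauCL J j t * m j (ctx t)| ≤
      tauCL J j t * √(2 * Real.log T / tauCL J j t)) :
    ∑ t ∈ range T, ((⨆ j, m j (ctx t)) - m (J t) (ctx t)) ≤ (K + 16 * K * Real.log T) / Δ := by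
  have hinitial : ∑ t ∈ range K, ((⨆ j, m j (ctx t)) - m (J t) (ctx t)) ≤ K * Δ⁻¹ := by
    have : ∀ t ∈ range K, (⨆ j, m j (ctx t)) - m (J t) (ctx t) ≤ Δ⁻¹ := fun t _ =>
      have : Nonempty (Fin K) := ⟨J t⟩
      gap_le_inv (hm · (ctx t)) hΔ (hgap _ _)
    simpa using sum_le_card_nsmul _ _ _ this
  have hlater := sum_le_card_mul_of_le_sqrt_div_tauCL J (s := Ico K T)
    (ρ := 8 * Real.log T) (mul_nonneg (by norm_num) (Real.log_natCast_nonneg T)) hΔ fun t ht => by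
      obtain ⟨hKt, htT⟩ := mem_Ico.1 ht
      exact ⟨hJ.one_le_tauCL _ hKt, hJ.gap_le m hKt htT (hconf · t hKt htT),
        hgap _ _ ∘ sub_pos.1⟩
  rw [← sum_range_add_sum_Ico _ hKT]
  calc _ ≤ K * Δ⁻¹ + K * (2 * (8 * Real.log T) / Δ) := add_le_add hinitial hlater
    _ = (K + 16 * K * Real.log T) / Δ := by ring

end IsUCB1CLRun

end Run

section Measurability

variable {Ω : Type*} {K C : ℕ}

lemma measurable_tauCL {m : MeasurableSpace Ω} {I : Ω → ℕ → Fin K} {t : ℕ}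
    (hI : ∀ u < t, Measurable[m] fun ω => I ω u) (i : Fin K) :
    Measurable[m] fun ω => tauCL (I ω) i t := by
  simp only [tauCL, card_filter]
  exact Finset.measurable_sum _ fun u hu =>
    Measurable.ite (hI u (mem_range.1 hu) (measurableSet_singleton i)) measurable_const
      measurable_const

lemma measurable_sigCL {m : MeasurableSpace Ω} {I : Ω → ℕ → Fin K}
    {r : Ω → Fin K → ℕ → Fin C → ℝ} {t : ℕ} (hI : ∀ u < t, Measurable[m] fun ω => I ω u)
    (hr : ∀ j u c, u < t → Measurable[m] fun ω => r ω j u c) (i : Fin K) (c : Fin C) :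
    Measurable[m] fun ω => sigCL (r ω) (I ω) i t c := by
  simp only [sigCL, sum_filter]
  exact Finset.measurable_sum _ fun u hu =>
    Measurable.ite (hI u (mem_range.1 hu) (measurableSet_singleton i))
      (hr i u c (mem_range.1 hu)) measurable_const

lemma measurable_scoreCL {m : MeasurableSpace Ω} {I : Ω → ℕ → Fin K}
    {r : Ω → Fin K → ℕ → Fin C → ℝ} (T : ℕ) {t : ℕ} (hI : ∀ u < t, Measurable[m] fun ω => I ω u)
    (hr : ∀ j u c, u < t → Measurable[m] fun ω => r ω j u c) (c : Fin C) (i : Fin K) :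
    Measurable[m] fun ω => scoreCL T (r ω) (I ω) t c i := by
  have hτ : Measurable[m] fun ω => (tauCL (I ω) i t : ℝ) :=
    measurable_from_nat.comp (measurable_tauCL hI i)
  exact ((measurable_sigCL hI hr i c).div hτ).add
    (continuous_sqrt.measurable.comp (measurable_const.div hτ))

lemma measurable_of_isLeast {m : MeasurableSpace Ω} {ι : Type*} [LinearOrder ι] [Countable ι]
    [MeasurableSpace ι] [MeasurableSingletonClass ι] {f : Ω → ι → ℝ} {a : Ω → ι}
    (hf : ∀ j, Measurable[m] fun ω => f ω j)
    (ha : ∀ ω, IsLeast {j | ∀ j', f ω j' ≤ f ω j} (a ω)) : Measurable[m] a := by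
  refine measurable_to_countable' fun j => ?_
  have hle : ∀ j j', Measurable[m] fun ω => f ω j' ≤ f ω j := fun j j' =>
    measurableSet_setOfPred.1 (measurableSet_le (hf j') (hf j))
  have hpre :
      a ⁻¹' {j} = {ω | (∀ j', f ω j' ≤ f ω j) ∧ ∀ k, (∀ j', f ω j' ≤ f ω k) → j ≤ k} := by
    ext ω
    exact ⟨fun h => h ▸ ⟨(ha ω).1, fun k hk => (ha ω).2 hk⟩,
      fun h => (ha ω).unique ⟨h.1, fun k hk => h.2 k hk⟩⟩
  rw [hpre]
  exact measurableSet_setOfPred.2 ((Measurable.forall (hle j)).and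
    (Measurable.forall fun k => (Measurable.forall (hle k)).imp measurable_const))

end Measurability

section Model

variable {Ω : Type*} {mΩ : MeasurableSpace Ω} {K C : ℕ}

def rewardFiltration (r : Ω → Fin K → ℕ → Fin C → ℝ) (T : ℕ)
    (hr : ∀ i t c, Measurable fun ω => r ω i t c) : Filtration ℕ mΩ where
  seq t := ⨆ p ∈ {p : Fin K × Fin T | (p.2 : ℕ) < t},
    MeasurableSpace.comap (fun ω c => r ω p.1 p.2 c) inferInstance
  mono' _ _ h := biSup_mono fun _ hp => lt_of_lt_of_le hp h
  le' _ := iSup₂_le fun p _ => (measurable_pi_lambda _ fun c => hr p.1 p.2 c).comap_le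

def firstPulls (I : Ω → ℕ → Fin K) (i : Fin K) (n s : ℕ) : Set Ω :=
  {ω | I ω s = i ∧ tauCL (I ω) i s < n}

/-- Contexts are indexed by the rounds before `T`, which keeps the union bound independent of `C`.
-/
def confidenceFailure (I : Ω → ℕ → Fin K) (r : Ω → Fin K → ℕ → Fin C → ℝ)
    (m : Fin K → Fin C → ℝ) (ctx : ℕ → Fin C) (T : ℕ) : Set Ω :=
  ⋃ p ∈ (univ : Finset (Fin K)) ×ˢ Icc 1 T ×ˢ range T,
    {ω | p.2.1 * √(2 * Real.log T / p.2.1) ≤ |indicatorSum (firstPulls I p.1 p.2.1)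
      (fun s ω => r ω p.1 s (ctx p.2.2) - m p.1 (ctx p.2.2)) T ω|}

variable {r : Ω → Fin K → ℕ → Fin C → ℝ} {T : ℕ} (hr : ∀ i t c, Measurable fun ω => r ω i t c)
  {ctx : ℕ → Fin C} {I : Ω → ℕ → Fin K}

lemma measurable_reward_rewardFiltration {u t : ℕ} (hut : u < t) (huT : u < T) (j : Fin K)
    (c : Fin C) :
    Measurable[rewardFiltration r T hr t] fun ω => r ω j u c := by
  have hp : ((j, ⟨u, huT⟩) : Fin K × Fin T) ∈ {p : Fin K × Fin T | (p.2 : ℕ) < t} := hut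
  exact ((measurable_pi_apply c).comp (comap_measurable _)).mono
    (le_iSup₂ (f := fun (p : Fin K × Fin T) (_ : p ∈ {p : Fin K × Fin T | (p.2 : ℕ) < t}) =>
      MeasurableSpace.comap (fun ω c => r ω p.1 p.2 c) inferInstance) _ hp) le_rfl

lemma indep_rewardFiltration {μ : Measure Ω}
    (hind : iIndepFun (fun (p : Fin K × Fin T) ω => (fun c => r ω p.1 (p.2 : ℕ) c)) μ)
    {s : ℕ} (hs : s < T) (i : Fin K) (c : Fin C) (a : ℝ) :
    Indep (rewardFiltration r T hr s)
      (MeasurableSpace.comap (fun ω => r ω i s c - a) inferInstance) μ := by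
  have hdisj : Disjoint {p : Fin K × Fin T | (p.2 : ℕ) < s} {(i, ⟨s, hs⟩)} :=
    Set.disjoint_singleton_right.2 (lt_irrefl s)
  have h := indep_iSup_of_disjoint
    (fun p => (measurable_pi_lambda _ fun c => hr p.1 p.2 c).comap_le)
    ((iIndepFun_iff_iIndep (fun _ => MeasurableSpace.pi) _ μ).1 hind) hdisj
  rw [_root_.iSup_singleton] at h
  refine indep_of_indep_of_le_right h ?_
  exact (((measurable_pi_apply (X := fun _ : Fin C => ℝ) c).sub_const a).comp
    (comap_measurable _)).comap_le

lemma measurable_pull_rewardFiltration (hI : ∀ ω, IsUCB1CLRun T ctx (r ω) (I ω)) {t : ℕ}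
    (htT : t < T) :
    Measurable[rewardFiltration r T hr t] fun ω => I ω t := by
  induction t using Nat.strong_induction_on with
  | _ t ih =>
  rcases lt_or_ge t K with htK | hKt
  · rw [show (fun ω => I ω t) = fun _ => ⟨t, htK⟩ from funext fun ω => (hI ω).initial t htK]
    exact measurable_const
  · refine measurable_of_isLeast (fun j => measurable_scoreCL T (fun u hu => ?_)
      (fun j _ c hu => measurable_reward_rewardFiltration hr hu (hu.trans htT) j c) _ j)
      fun ω => (hI ω).isLeast t hKt htT
    exact (ih u hu (hu.trans htT)).mono ((rewardFiltration r T hr).mono hu.le) le_rfl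

lemma measurableSet_firstPulls (hI : ∀ ω, IsUCB1CLRun T ctx (r ω) (I ω)) (i : Fin K) (n : ℕ)
    {s : ℕ} (hs : s < T) : MeasurableSet[rewardFiltration r T hr s] (firstPulls I i n s) :=
  (measurable_pull_rewardFiltration hr hI hs (measurableSet_singleton i)).inter
    (measurable_tauCL (fun _ hu =>
      (measurable_pull_rewardFiltration hr hI (hu.trans hs)).mono
        ((rewardFiltration r T hr).mono hu.le) le_rfl) i measurableSet_Iio)

lemma indicatorSum_firstPulls_one_le (I : Ω → ℕ → Fin K) (i : Fin K) (n T : ℕ) (ω : Ω) :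
    indicatorSum (firstPulls I i n) 1 T ω ≤ n := by
  simp only [indicatorSum, Set.indicator_apply, firstPulls, Set.mem_ofPred_eq, Pi.one_apply]
  rw [sum_boole]
  exact_mod_cast card_filter_tauCL_lt_le (I ω) i n T

lemma indicatorSum_firstPulls_tauCL (I : Ω → ℕ → Fin K) (i : Fin K) (c : Fin C) (a : ℝ) {t : ℕ}
    (htT : t ≤ T) (ω : Ω) :
    indicatorSum (firstPulls I i (tauCL (I ω) i t)) (fun s ω => r ω i s c - a) T ω
      = sigCL (r ω) (I ω) i t c - tauCL (I ω) i t * a := by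
  simp only [indicatorSum, Set.indicator_apply, firstPulls, Set.mem_ofPred_eq]
  rw [← sum_filter, filter_tauCL_lt_tauCL (I ω) i htT, sum_sub_distrib, sum_const, nsmul_eq_mul]
  rfl

lemma regret_le_of_notMem_confidenceFailure {m : Fin K → Fin C → ℝ} {ω : Ω}
    (hI : IsUCB1CLRun T ctx (r ω) (I ω)) (hKT : K ≤ T)
    (hm : ∀ i c, m i c ∈ Set.Icc 0 1) {Δ : ℝ} (hΔ : 0 < Δ)
    (hgap : ∀ i c, m i c < (⨆ j, m j c) → Δ ≤ (⨆ j, m j c) - m i c)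
    (hω : ω ∉ confidenceFailure I r m ctx T) :
    ∑ t ∈ range T, ((⨆ j, m j (ctx t)) - m (I ω t) (ctx t)) ≤ (K + 16 * K * Real.log T) / Δ := by
  refine hI.regret_le hKT hm hΔ hgap fun j t hKt htT => ?_
  have hmem : (j, tauCL (I ω) j t, t) ∈ (univ : Finset (Fin K)) ×ˢ Icc 1 T ×ˢ range T := by
    simp [hI.one_le_tauCL j hKt, ((tauCL_le _ _ t).trans htT.le), htT]
  have hgood := fun h => hω (Set.mem_biUnion hmem h)
  rw [← indicatorSum_firstPulls_tauCL I j _ _ htT.le]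
  exact (not_le.1 hgood).le

variable {μ : Measure Ω} [IsProbabilityMeasure μ] {m : Fin K → Fin C → ℝ}
  (hr01 : ∀ ω i t c, r ω i t c ∈ Set.Icc 0 1)
  (hind : iIndepFun (fun (p : Fin K × Fin T) ω => (fun c => r ω p.1 (p.2 : ℕ) c)) μ)
  (hmean : ∀ i t c, t < T → μ[fun ω => r ω i t c] = m i c)
  (hI : ∀ ω, IsUCB1CLRun T ctx (r ω) (I ω))
include hr hr01 hind hmean hI

lemma hasSubgaussianMGF_firstPulls (i : Fin K) (n : ℕ) (c : Fin C) :
    HasSubgaussianMGF (indicatorSum (firstPulls I i n) (fun s ω => r ω i s c - m i c) T)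
      (4⁻¹ * n) μ := by
  refine hasSubgaussianMGF_indicatorSum (rewardFiltration r T hr)
    (fun s hs => (measurable_reward_rewardFiltration hr (Nat.lt_succ_self s) hs i c).sub_const _)
    (fun s hs => measurableSet_firstPulls hr hI i n hs)
    (fun s hs => indep_rewardFiltration hr hind hs i c _) (fun s hs => ?_)
    (indicatorSum_firstPulls_one_le I i n T)
  have h := hasSubgaussianMGF_of_mem_Icc (hr i s c).aemeasurable (ae_of_all μ (hr01 · i s c))
  rw [hmean i s c hs] at h
  convert h using 1
  norm_num

lemma measureReal_firstPulls_deviation_le (hT : 0 < T) (i : Fin K) {n : ℕ} (hn : 1 ≤ n)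
    (c : Fin C) :
    μ.real {ω | n * √(2 * Real.log T / n) ≤
      |indicatorSum (firstPulls I i n) (fun s ω => r ω i s c - m i c) T ω|} ≤
      2 * ((T : ℝ) ^ 4)⁻¹ := by
  have hL := Real.log_natCast_nonneg T
  have hn0 : (0 : ℝ) < n := by exact_mod_cast hn
  refine ((hasSubgaussianMGF_firstPulls hr hr01 hind hmean hI i n c).measureReal_abs_ge_le
    (by positivity)).trans_eq ?_
  have hexp : (n * √(2 * Real.log T / n)) ^ 2 / (2 * (4⁻¹ * n : ℝ≥0)) = 4 * Real.log T := by
    rw [mul_pow, sq_sqrt (by positivity)]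
    push_cast
    field_simp
  have hpow : (4 : ℝ) * Real.log T = Real.log ((T : ℝ) ^ 4) := by rw [Real.log_pow]; norm_num
  rw [neg_div, hexp, exp_neg, hpow, exp_log (by positivity)]

lemma measureReal_confidenceFailure_le (hT : 0 < T) :
    μ.real (confidenceFailure I r m ctx T) ≤ 2 * K / T ^ 2 := by
  calc μ.real (confidenceFailure I r m ctx T)
      ≤ ∑ p ∈ (univ : Finset (Fin K)) ×ˢ Icc 1 T ×ˢ range T, 2 * ((T : ℝ) ^ 4)⁻¹ := by
        refine (measureReal_biUnion_finset_le _ _).trans (sum_le_sum fun p hp => ?_)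
        exact measureReal_firstPulls_deviation_le hr hr01 hind hmean hI hT p.1 (by simp_all) _
    _ = 2 * K / T ^ 2 := by
      simp only [sum_const, card_product, card_univ, Fintype.card_fin, Nat.card_Icc,
        card_range, nsmul_eq_mul]
      field_simp
      push_cast
      ring

end Model

/-- gap-dependent bound for UCB1.CL.  If every suboptimal arm/context pair
has gap at least `Δ* > 0`, then UCB1.CL has expected pseudo-regret at most
`C₀ · K · log T / Δ*` for a universal constant `C₀ > 0`. -/
theorem ucb1cl_gap_regret :
    ∃ C₀ : ℝ, 0 < C₀ ∧
      ∀ (K C T : ℕ), 1 ≤ K → 1 ≤ C → K ≤ T → 2 ≤ T →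
      ∀ (Δstar : ℝ), 0 < Δstar →
      ∀ (Ω : Type) (_ : MeasurableSpace Ω) (μ : Measure Ω), IsProbabilityMeasure μ →
      ∀ (r : Ω → Fin K → ℕ → Fin C → ℝ) (F : Fin K → Fin C → Measure ℝ)
        (m : Fin K → Fin C → ℝ) (ctx : ℕ → Fin C) (I : Ω → ℕ → Fin K),
        (∀ i t c, Measurable (fun ω => r ω i t c)) →
        (∀ ω i t c, r ω i t c ∈ Set.Icc (0:ℝ) 1) →
        (∀ i c, IsProbabilityMeasure (F i c)) →
        (∀ (i : Fin K) (t : Fin T) (c : Fin C),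
          Measure.map (fun ω => r ω i (t : ℕ) c) μ = F i c) →
        iIndepFun
          (fun (p : Fin K × Fin T) ω => (fun c => r ω p.1 (p.2 : ℕ) c)) μ →
        (∀ i c, ∫ x, x ∂(F i c) = m i c) →
        -- every pair (i,c) with μ_i(c) < μ*(c) has gap at least Δ*
        (∀ (i : Fin K) (c : Fin C), m i c < (⨆ j, m j c) →
          Δstar ≤ (⨆ j, m j c) - m i c) →
        (∀ ω t (ht : t < K), I ω t = ⟨t, ht⟩) →
        (∀ ω t, K ≤ t → t < T →
          (∀ j, scoreCL T (r ω) (I ω) t (ctx t) j ≤ scoreCL T (r ω) (I ω) t (ctx t) (I ω t)) ∧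
          (∀ j, (∀ j', scoreCL T (r ω) (I ω) t (ctx t) j' ≤ scoreCL T (r ω) (I ω) t (ctx t) j)
            → I ω t ≤ j)) →
        ∫ ω, (∑ t ∈ Finset.range T, ((⨆ j, m j (ctx t)) - m (I ω t) (ctx t))) ∂μ
          ≤ C₀ * K * Real.log T / Δstar := by
  refine ⟨20, by norm_num, ?_⟩
  intro K C T hK _ hKT hT2 Δstar hΔ Ω _ μ _ r F m ctx I hr hr01 _ hmap hind hmean hgap hI0 hIarg
  have : Nonempty (Fin K) := ⟨⟨0, hK⟩⟩
  have hrun : ∀ ω, IsUCB1CLRun T ctx (r ω) (I ω) := fun ω =>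
    ⟨hI0 ω, fun t h1 h2 => ⟨(hIarg ω t h1 h2).1, fun j hj => (hIarg ω t h1 h2).2 j hj⟩⟩
  have hrmean : ∀ i t c, t < T → μ[fun ω => r ω i t c] = m i c := fun i t c ht => by
    rw [← hmean, ← hmap i ⟨t, ht⟩ c]
    exact (integral_map (hr i t c).aemeasurable aestronglyMeasurable_id).symm
  have hm01 : ∀ i c, m i c ∈ Set.Icc 0 1 := fun i c =>
    hrmean i 0 c (by omega) ▸ integral_mem_Icc_zero_one (hr01 · i 0 c)
  have hbad : ∀ ω, ∑ t ∈ range T, ((⨆ j, m j (ctx t)) - m (I ω t) (ctx t)) ≤ T * Δstar⁻¹ :=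
    fun ω => (sum_le_card_nsmul (range T) _ _ fun t _ =>
      gap_le_inv (hm01 · (ctx t)) hΔ (hgap _ _)).trans_eq (by simp)
  have hT : (2 : ℝ) ≤ T := by exact_mod_cast hT2
  have hL : 1 / 2 ≤ Real.log T := by
    linarith [Real.log_two_gt_d9, Real.log_le_log two_pos hT]
  calc ∫ ω, (∑ t ∈ range T, ((⨆ j, m j (ctx t)) - m (I ω t) (ctx t))) ∂μ
      ≤ (K + 16 * K * Real.log T) / Δstar + T * Δstar⁻¹ * μ.real (confidenceFailure I r m ctx T) :=
        integral_le_add_mul_measureReal (fun ω => sum_nonneg fun t _ => gap_nonneg _ _)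
          (by positivity) (fun ω => regret_le_of_notMem_confidenceFailure (hrun ω) hKT hm01 hΔ hgap)
          hbad
    _ ≤ (K + 16 * K * Real.log T) / Δstar + T * Δstar⁻¹ * (2 * K / T ^ 2) := by
      gcongr
      exact measureReal_confidenceFailure_le hr hr01 hind hrmean hrun (by omega)
    _ = (K + 16 * K * Real.log T + 2 * K / T) / Δstar := by field_simp
    _ ≤ 20 * K * Real.log T / Δstar := by
      have h2K : 2 * K / T ≤ (K : ℝ) := div_le_of_le_mul₀ (by positivity) (by positivity)
        (by nlinarith [(Nat.cast_nonneg K : (0 : ℝ) ≤ K)])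
      gcongr
      nlinarith [(Nat.cast_nonneg K : (0 : ℝ) ≤ K)]
end

section
/- Let n ≥ 1, let M ≥ 0 and Δ_min > 0 be real numbers, and let Δ_1 ≥ Δ_2 ≥ … ≥ Δ_n be real numbers with 1 ≥ Δ_1 and Δ_n ≥ Δ_min. Let X_1, …, X_n ≥ 0 be real numbers satisfying, for every j ∈ {1, …, n}, the prefix constraint X_1 + X_2 + … + X_j ≤ M / Δ_j². Then Σ_{j=1}^n Δ_j · X_j ≤ 2M / Δ_min. -/
private lemma tel_aux (a : ℕ → ℝ) (c : ℝ) (hc : 0 < c) (hpos : ∀ i, c ≤ a i)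
    (hanti : ∀ i, a (i + 1) ≤ a i) (m : ℕ) :
    ∑ i ∈ Finset.range m, (a i - a (i + 1)) / (a i) ^ 2 ≤ 1 / a m - 1 / a 0 := by
  induction m with
  | zero => simp
  | succ m ih =>
    rw [Finset.sum_range_succ]
    have hA : 0 < a m := lt_of_lt_of_le hc (hpos m)
    have hB : 0 < a (m + 1) := lt_of_lt_of_le hc (hpos (m + 1))
    have key : (a m - a (m + 1)) / (a m) ^ 2 ≤ 1 / a (m + 1) - 1 / a m := by
      have h1 : (a m - a (m + 1)) / (a m) ^ 2 ≤ (a m - a (m + 1)) / (a (m + 1) * a m) := by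
        apply div_le_div_of_nonneg_left (by linarith [hanti m]) (by positivity)
        nlinarith [hanti m]
      have h2 : (a m - a (m + 1)) / (a (m + 1) * a m) = 1 / a (m + 1) - 1 / a m := by
        field_simp
      linarith
    linarith


/-- the linear-programming inequality underlying the pre-regret bound of
UCB1.CL: if `Δ 0 ≥ Δ 1 ≥ … ≥ Δ (n-1)` with `1 ≥ Δ 0`, `Δ (n-1) ≥ Δmin > 0`, the `X j`
are nonnegative and satisfy the prefix constraints `X 0 + ⋯ + X j ≤ M / (Δ j)²`,
then `∑ j, Δ j * X j ≤ 2 * M / Δmin`. -/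
theorem lp_prefix_bound (n : ℕ) (hn : 1 ≤ n) (M Δmin : ℝ) (hM : 0 ≤ M) (hΔmin : 0 < Δmin)
    (Δ X : Fin n → ℝ)
    (hanti : ∀ i j : Fin n, i ≤ j → Δ j ≤ Δ i)
    (hfirst : Δ ⟨0, by omega⟩ ≤ 1)
    (hlast : Δmin ≤ Δ ⟨n - 1, by omega⟩)
    (hX : ∀ j, 0 ≤ X j)
    (hpref : ∀ j : Fin n, ∑ i ∈ Finset.Iic j, X i ≤ M / (Δ j) ^ 2) :
    ∑ j, Δ j * X j ≤ 2 * M / Δmin := by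
  set a : ℕ → ℝ := fun i => Δ ⟨min i (n - 1), by omega⟩ with ha_def
  set x : ℕ → ℝ := fun i => if h : i < n then X ⟨i, h⟩ else 0 with hx_def
  have ha_pos : ∀ i, Δmin ≤ a i := by
    intro i
    exact le_trans hlast (hanti _ _ (by simp [Fin.le_def]))
  have ha_anti : ∀ i, a (i + 1) ≤ a i := by
    intro i
    exact hanti _ _ (by simp only [Fin.mk_le_mk]; omega)
  have hx_nonneg : ∀ i, 0 ≤ x i := by
    intro i
    simp only [hx_def]
    split
    · exact hX _
    · exact le_rfl
  -- prefix constraints in range form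
  have hpref' : ∀ i, i < n → ∑ k ∈ Finset.range (i + 1), x k ≤ M / (a i) ^ 2 := by
    intro i hi
    have h1 : ∑ k ∈ Finset.range (i + 1), x k = ∑ k ∈ Finset.Iic (⟨i, hi⟩ : Fin n), X k := by
      refine Finset.sum_nbij' (fun k => (⟨min k (n-1), by omega⟩ : Fin n)) (fun k => (k : ℕ)) ?_ ?_ ?_ ?_ ?_
      · intro k hk
        simp only [Finset.mem_range] at hk
        simp only [Finset.mem_Iic, Fin.le_def]
        omega
      · intro k hk
        simp only [Finset.mem_Iic, Fin.le_def] at hk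
        simp only [Finset.mem_range]
        omega
      · intro k hk
        simp only [Finset.mem_range] at hk
        simp only [Fin.val_mk]
        omega
      · intro k hk
        simp only [Finset.mem_Iic, Fin.le_def] at hk
        ext; simp only [Fin.val_mk]; omega
      · intro k hk
        simp only [Finset.mem_range] at hk
        simp only [hx_def]
        rw [dif_pos (by omega)]
        congr 1
        ext; simp; omega
    have h2 : a i = Δ ⟨i, hi⟩ := by
      simp only [ha_def]; congr 1; ext; simp; omega
    rw [h1, h2]; exact hpref _
  have haN : 0 < a (n - 1) := lt_of_lt_of_le hΔmin (ha_pos _)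
  -- rewrite the Fin sum as a range sum
  have hsum : ∑ j, Δ j * X j = ∑ i ∈ Finset.range n, a i * x i := by
    rw [Finset.sum_range fun i => a i * x i]
    apply Finset.sum_congr rfl
    intro j _
    simp only [ha_def, hx_def]
    rw [dif_pos j.isLt]
    have hj : (⟨min (j : ℕ) (n - 1), by omega⟩ : Fin n) = j := by
      ext; simp; omega
    rw [hj]
  -- Abel summation
  have abel := Finset.sum_range_by_parts a x n
  simp only [smul_eq_mul] at abel
  rw [hsum, abel]
  have hGn : a (n - 1) * (∑ i ∈ Finset.range n, x i) ≤ M / a (n - 1) := by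
    have := hpref' (n - 1) (by omega)
    have hrange : n - 1 + 1 = n := by omega
    rw [hrange] at this
    calc a (n - 1) * (∑ i ∈ Finset.range n, x i) ≤ a (n - 1) * (M / (a (n - 1)) ^ 2) :=
          mul_le_mul_of_nonneg_left this (le_of_lt haN)
      _ = M / a (n - 1) := by field_simp
  have hterm : ∀ i ∈ Finset.range (n - 1),
      -((a (i + 1) - a i) * ∑ k ∈ Finset.range (i + 1), x k)
        ≤ M * ((a i - a (i + 1)) / (a i) ^ 2) := by
    intro i hi
    simp only [Finset.mem_range] at hi
    have h1 : 0 ≤ a i - a (i + 1) := by linarith [ha_anti i]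
    have h2 := hpref' i (by omega)
    have : -((a (i + 1) - a i) * ∑ k ∈ Finset.range (i + 1), x k)
        = (a i - a (i + 1)) * ∑ k ∈ Finset.range (i + 1), x k := by ring
    rw [this]
    calc (a i - a (i + 1)) * ∑ k ∈ Finset.range (i + 1), x k
        ≤ (a i - a (i + 1)) * (M / (a i) ^ 2) := mul_le_mul_of_nonneg_left h2 h1
      _ = M * ((a i - a (i + 1)) / (a i) ^ 2) := by ring
  have htel := tel_aux a Δmin hΔmin ha_pos ha_anti (n - 1)
  have hsum2 : -(∑ i ∈ Finset.range (n - 1), (a (i + 1) - a i) * ∑ k ∈ Finset.range (i + 1), x k)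
      ≤ M * (1 / a (n - 1) - 1 / a 0) := by
    calc -(∑ i ∈ Finset.range (n - 1), (a (i + 1) - a i) * ∑ k ∈ Finset.range (i + 1), x k)
        = ∑ i ∈ Finset.range (n - 1), -((a (i + 1) - a i) * ∑ k ∈ Finset.range (i + 1), x k) := by
          rw [← Finset.sum_neg_distrib]
      _ ≤ ∑ i ∈ Finset.range (n - 1), M * ((a i - a (i + 1)) / (a i) ^ 2) :=
          Finset.sum_le_sum hterm
      _ = M * ∑ i ∈ Finset.range (n - 1), (a i - a (i + 1)) / (a i) ^ 2 := by
          rw [Finset.mul_sum]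
      _ ≤ M * (1 / a (n - 1) - 1 / a 0) := mul_le_mul_of_nonneg_left htel hM
  have ha0 : 0 < a 0 := lt_of_lt_of_le hΔmin (ha_pos 0)
  have h1 : M / a (n - 1) ≤ M / Δmin := by gcongr; exact ha_pos _
  have h2 : M * (1 / a (n - 1) - 1 / a 0) ≤ M / Δmin := by
    have h3 : 1 / a (n - 1) - 1 / a 0 ≤ 1 / Δmin := by
      have : 1 / a (n - 1) ≤ 1 / Δmin := by gcongr; exact ha_pos _
      have : 0 < 1 / a 0 := by positivity
      linarith
    calc M * (1 / a (n - 1) - 1 / a 0) ≤ M * (1 / Δmin) := mul_le_mul_of_nonneg_left h3 hM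
      _ = M / Δmin := by ring
  have hgoal : 2 * M / Δmin = M / Δmin + M / Δmin := by ring
  linarith [hGn, hsum2]
end

section
/- For every finite directed graph G with all self-loops on a finite vertex set V, the maximum acyclic subgraph number λ(G) equals the supremum, over all functions f : V → ℝ_{>0}, of Σ_{v ∈ V} f(v) / (Σ_{w ∈ I(v)} f(w)). -/
open Finset

/-- The maximum acyclic subgraph number `λ(G)` of a directed graph `adj` on a finite
vertex set: the largest `r` such that there are distinct vertices `v₁, …, v_r` with no
edge `v_i → v_j` for `i > j`. -/
noncomputable def acyclicNumber {V : Type*} [Fintype V] (adj : V → V → Prop) : ℕ :=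
  sSup {r : ℕ | ∃ f : Fin r → V, Function.Injective f ∧
    ∀ i j : Fin r, j < i → ¬ adj (f i) (f j)}

set_option linter.unusedSectionVars false

section Aux

variable {V : Type*} [Fintype V] (adj : V → V → Prop) [DecidableRel adj]

/-- chains (acyclic sequences) inside a finset `s`. -/
def chainSet (s : Finset V) : Set ℕ :=
  {r | ∃ f : Fin r → V, Function.Injective f ∧ (∀ i, f i ∈ s) ∧
    ∀ i j : Fin r, j < i → ¬ adj (f i) (f j)}

noncomputable def chainNum (s : Finset V) : ℕ := sSup (chainSet adj s)

lemma zero_mem_chainSet (s : Finset V) : 0 ∈ chainSet adj s :=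
  ⟨Fin.elim0, fun i => i.elim0, fun i => i.elim0, fun i => i.elim0⟩

lemma chainSet_bddAbove (s : Finset V) : BddAbove (chainSet adj s) := by
  refine ⟨Fintype.card V, fun r hr => ?_⟩
  obtain ⟨f, hf, -, -⟩ := hr
  simpa using Fintype.card_le_of_injective f hf

lemma chainNum_mem (s : Finset V) : chainNum adj s ∈ chainSet adj s :=
  Nat.sSup_mem ⟨0, zero_mem_chainSet adj s⟩ (chainSet_bddAbove adj s)

lemma le_chainNum {s : Finset V} {r : ℕ} (hr : r ∈ chainSet adj s) : r ≤ chainNum adj s :=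
  le_csSup (chainSet_bddAbove adj s) hr

lemma chainNum_step (hrefl : ∀ v, adj v v) {s : Finset V} {u : V} (hu : u ∈ s) :
    chainNum adj (s.filter (fun w => ¬ adj w u)) + 1 ≤ chainNum adj s := by
  set t := s.filter (fun w => ¬ adj w u) with ht
  obtain ⟨g, hginj, hgmem, hgac⟩ := chainNum_mem adj t
  refine le_chainNum adj ⟨Fin.cases u g, ?_, ?_, ?_⟩
  · intro i j hij
    induction i using Fin.cases with
    | zero =>
      induction j using Fin.cases with
      | zero => rfl
      | succ j =>
        exfalso
        simp only [Fin.cases_zero, Fin.cases_succ] at hij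
        have := hgmem j
        rw [ht, Finset.mem_filter] at this
        exact this.2 (hij ▸ hrefl u)
    | succ i =>
      induction j using Fin.cases with
      | zero =>
        exfalso
        simp only [Fin.cases_zero, Fin.cases_succ] at hij
        have := hgmem i
        rw [ht, Finset.mem_filter] at this
        exact this.2 (hij ▸ hrefl (g i))
      | succ j =>
        simp only [Fin.cases_succ] at hij
        exact congrArg Fin.succ (hginj hij)
  · intro i
    induction i using Fin.cases with
    | zero => simpa using hu
    | succ i =>
      have := hgmem i
      rw [ht, Finset.mem_filter] at this
      simpa using this.1
  · intro i j hij
    induction i using Fin.cases with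
    | zero => exact absurd hij (Nat.not_lt_zero _)
    | succ i =>
      induction j using Fin.cases with
      | zero =>
        have := hgmem i
        rw [ht, Finset.mem_filter] at this
        simpa using this.2
      | succ j =>
        simp only [Fin.cases_succ]
        exact hgac i j (by exact_mod_cast Nat.lt_of_succ_lt_succ hij)

/-- Key upper bound: any positive weighting sums to at most the chain number. -/
lemma sum_le_chainNum (hrefl : ∀ v, adj v v) (f : V → ℝ) (hf : ∀ v, 0 < f v) :
    ∀ s : Finset V,
      ∑ v ∈ s, f v / (∑ w ∈ s.filter (fun w => adj w v), f w) ≤ (chainNum adj s : ℝ) := by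
  intro s
  induction s using Finset.strongInduction with
  | _ s ih =>
    rcases s.eq_empty_or_nonempty with rfl | hs
    · simp
    classical
    set g : V → ℝ := fun v => ∑ w ∈ s.filter (fun w => adj w v), f w with hg
    obtain ⟨u, hus, humin⟩ := s.exists_min_image g hs
    have hgpos : ∀ v ∈ s, 0 < g v := by
      intro v hv
      refine Finset.sum_pos (fun w _ => hf w) ⟨v, Finset.mem_filter.2 ⟨hv, hrefl v⟩⟩
    set t := s.filter (fun w => ¬ adj w u) with htdef
    have hts : t ⊂ s := by
      refine Finset.filter_ssubset.2 ⟨u, hus, by simp [hrefl u]⟩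
    -- split the sum
    have hsplit : ∑ v ∈ s, f v / g v =
        (∑ v ∈ s.filter (fun v => adj v u), f v / g v) + ∑ v ∈ t, f v / g v := by
      rw [htdef, Finset.sum_filter_add_sum_filter_not]
    -- first part ≤ 1
    have h1 : ∑ v ∈ s.filter (fun v => adj v u), f v / g v ≤ 1 := by
      have : ∑ v ∈ s.filter (fun v => adj v u), f v / g v ≤
          ∑ v ∈ s.filter (fun v => adj v u), f v / g u := by
        refine Finset.sum_le_sum fun v hv => ?_
        have hvs : v ∈ s := (Finset.mem_filter.1 hv).1
        exact div_le_div_of_nonneg_left (hf v).le (hgpos u hus) (humin v hvs)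
      rw [← Finset.sum_div] at this
      have hgu : g u = ∑ v ∈ s.filter (fun v => adj v u), f v := rfl
      rw [← hgu] at this
      rw [div_self (hgpos u hus).ne'] at this
      exact this
    -- second part ≤ chainNum t
    have h2 : ∑ v ∈ t, f v / g v ≤ (chainNum adj t : ℝ) := by
      have step : ∑ v ∈ t, f v / g v ≤
          ∑ v ∈ t, f v / (∑ w ∈ t.filter (fun w => adj w v), f w) := by
        refine Finset.sum_le_sum fun v hv => ?_
        have hvt : v ∈ t := hv
        have hpos : 0 < ∑ w ∈ t.filter (fun w => adj w v), f w :=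
          Finset.sum_pos (fun w _ => hf w) ⟨v, Finset.mem_filter.2 ⟨hvt, hrefl v⟩⟩
        have hsub : t.filter (fun w => adj w v) ⊆ s.filter (fun w => adj w v) :=
          Finset.filter_subset_filter _ hts.subset
        have hle : ∑ w ∈ t.filter (fun w => adj w v), f w ≤ g v :=
          Finset.sum_le_sum_of_subset_of_nonneg hsub (fun w _ _ => (hf w).le)
        exact div_le_div_of_nonneg_left (hf v).le hpos hle
      exact step.trans (ih t hts)
    have hstep : (chainNum adj t : ℝ) + 1 ≤ (chainNum adj s : ℝ) := by
      exact_mod_cast chainNum_step adj hrefl hus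
    calc ∑ v ∈ s, f v / g v
        ≤ 1 + (chainNum adj t : ℝ) := by rw [hsplit]; linarith
      _ ≤ (chainNum adj s : ℝ) := by linarith

end Aux


lemma geo_bound {M : ℝ} (hM : 2 ≤ M) : ∀ i : ℕ, ∑ j ∈ Finset.range i, M ^ (j + 1) ≤ 2 * M ^ i := by
  have hM0 : (0:ℝ) < M := lt_of_lt_of_le (by norm_num) hM
  intro i
  induction i with
  | zero => simp
  | succ i ih =>
    rw [Finset.sum_range_succ]
    have h1 : (2:ℝ) * M ^ i ≤ M ^ (i+1) := by
      rw [pow_succ]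
      nlinarith [pow_pos hM0 i]
    nlinarith [pow_pos hM0 i]

lemma chainNum_univ_eq {V : Type*} [Fintype V] (adj : V → V → Prop) [DecidableRel adj] :
    chainNum adj Finset.univ = acyclicNumber adj := by
  unfold chainNum acyclicNumber
  congr 1
  ext r
  constructor
  · rintro ⟨f, h1, -, h3⟩; exact ⟨f, h1, h3⟩
  · rintro ⟨f, h1, h3⟩; exact ⟨f, h1, fun i => Finset.mem_univ _, h3⟩

theorem acyclicNumber_eq_sup_weighting' (V : Type*) [Fintype V]
    (adj : V → V → Prop) [DecidableRel adj] (hrefl : ∀ v, adj v v) :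
    (acyclicNumber adj : ℝ) =
      sSup {x : ℝ | ∃ f : V → ℝ, (∀ v, 0 < f v) ∧
        x = ∑ v, f v / ∑ w ∈ Finset.univ.filter (fun w => adj w v), f w} := by
  classical
  set S := {x : ℝ | ∃ f : V → ℝ, (∀ v, 0 < f v) ∧
      x = ∑ v, f v / ∑ w ∈ Finset.univ.filter (fun w => adj w v), f w} with hS
  -- every element of S is at most the acyclic number
  have hub : ∀ x ∈ S, x ≤ (acyclicNumber adj : ℝ) := by
    rintro x ⟨f, hf, rfl⟩
    have := sum_le_chainNum adj hrefl f hf Finset.univ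
    rwa [chainNum_univ_eq] at this
  have hne : S.Nonempty := ⟨_, ⟨fun _ => 1, fun _ => one_pos, rfl⟩⟩
  have hbdd : BddAbove S := ⟨_, hub⟩
  refine le_antisymm ?_ (csSup_le hne hub)
  rw [Real.le_sSup_iff hbdd hne]
  intro ε hε
  -- take a maximum acyclic chain
  set r := acyclicNumber adj with hr
  obtain ⟨c, hcinj, -, hcac⟩ : ∃ c : Fin r → V, Function.Injective c ∧ (∀ i, c i ∈ Finset.univ) ∧
      ∀ i j : Fin r, j < i → ¬ adj (c i) (c j) := by
    have := chainNum_mem adj (Finset.univ : Finset V)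
    rwa [chainNum_univ_eq] at this
  set N := (Fintype.card V : ℝ) with hN
  have hN0 : (0:ℝ) ≤ N := by positivity
  set M : ℝ := max 2 ((r * (N + 2)) / (-ε) + 1) with hM
  have hM2 : (2:ℝ) ≤ M := le_max_left _ _
  have hM0 : (0:ℝ) < M := lt_of_lt_of_le (by norm_num) hM2
  have hεpos : (0:ℝ) < -ε := by linarith
  have hkey : (r : ℝ) * (N + 2) / M < -ε := by
    have h1 : (r : ℝ) * (N + 2) / (-ε) + 1 ≤ M := le_max_right _ _
    have h2 : (r : ℝ) * (N + 2) / (-ε) < M := by linarith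
    rw [div_lt_iff₀ hεpos] at h2
    rw [div_lt_iff₀ hM0]
    linarith
  -- the weighting
  set w : V → ℝ := fun v =>
    if h : ∃ i : Fin r, c i = v then M ^ ((Classical.choose h : Fin r).val + 1) else 1
    with hw
  have hwpos : ∀ v, 0 < w v := by
    intro v
    simp only [hw]
    split
    · exact pow_pos hM0 _
    · exact one_pos
  have hwc : ∀ i : Fin r, w (c i) = M ^ (i.val + 1) := by
    intro i
    simp only [hw]
    have h : ∃ j : Fin r, c j = c i := ⟨i, rfl⟩
    rw [dif_pos h]
    congr 2
    exact congrArg Fin.val (hcinj (Classical.choose_spec h))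
  set D : V → ℝ := fun v => ∑ x ∈ Finset.univ.filter (fun x => adj x v), w x with hD
  have hDpos : ∀ v, 0 < D v :=
    fun v => Finset.sum_pos (fun x _ => hwpos x)
      ⟨v, Finset.mem_filter.2 ⟨Finset.mem_univ v, hrefl v⟩⟩
  refine ⟨∑ v, w v / D v, ⟨w, hwpos, rfl⟩, ?_⟩
  -- bound the denominator at chain vertices
  have hDle : ∀ i : Fin r, D (c i) ≤ M ^ (i.val + 1) + (N + 2) * M ^ i.val := by
    intro i
    set b : V → ℝ := fun x => if ∃ j : Fin r, j.val ≤ i.val ∧ c j = x then w x else 1 with hb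
    have hbnn : ∀ x, 0 ≤ b x := by
      intro x; simp only [hb]; split
      · exact (hwpos x).le
      · exact zero_le_one
    have step1 : D (c i) ≤ ∑ x, b x := by
      simp only [hD]
      refine le_trans (Finset.sum_le_sum ?_)
        (Finset.sum_le_sum_of_subset_of_nonneg (Finset.filter_subset _ _)
          (fun x _ _ => hbnn x))
      intro x hx
      have hadj : adj x (c i) := (Finset.mem_filter.1 hx).2
      simp only [hb]
      by_cases h : ∃ j : Fin r, c j = x
      · obtain ⟨j, rfl⟩ := h
        have hji : j.val ≤ i.val := by
          by_contra hlt
          exact hcac j i (by omega) hadj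
        rw [if_pos ⟨j, hji, rfl⟩]
      · rw [if_neg (by rintro ⟨j, -, hj⟩; exact h ⟨j, hj⟩)]
        simp only [hw]; rw [dif_neg h]
    have step2 : ∑ x, b x ≤ (∑ j ∈ Finset.range (i.val + 1), M ^ (j + 1)) + N := by
      simp only [hb]
      rw [Finset.sum_ite, Finset.sum_const]
      have hcard : ((Finset.univ.filter
          (fun x => ¬ ∃ j : Fin r, j.val ≤ i.val ∧ c j = x)).card : ℝ) ≤ N := by
        rw [hN]
        exact_mod_cast Finset.card_filter_le _ _
      have himg : Finset.univ.filter (fun x => ∃ j : Fin r, j.val ≤ i.val ∧ c j = x) =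
          (Finset.univ.filter (fun j : Fin r => j.val ≤ i.val)).image c := by
        ext x
        simp only [Finset.mem_filter, Finset.mem_univ, true_and, Finset.mem_image]
        try (constructor
             · rintro ⟨j, hj, rfl⟩; exact ⟨j, Finset.mem_filter.2 ⟨Finset.mem_univ _, hj⟩, rfl⟩
             · rintro ⟨j, hj, rfl⟩; exact ⟨j, (Finset.mem_filter.1 hj).2, rfl⟩)
      have hsum1 : ∑ x ∈ Finset.univ.filter
            (fun x => ∃ j : Fin r, j.val ≤ i.val ∧ c j = x), w x =
          ∑ j ∈ Finset.univ.filter (fun j : Fin r => j.val ≤ i.val), M ^ (j.val + 1) := by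
        rw [himg, Finset.sum_image (fun a _ b _ h => hcinj h)]
        exact Finset.sum_congr rfl fun j _ => hwc j
      have hsum2 : ∑ j ∈ Finset.univ.filter (fun j : Fin r => j.val ≤ i.val), M ^ (j.val + 1) =
          ∑ j ∈ Finset.range (i.val + 1), M ^ (j + 1) := by
        rw [Finset.sum_filter]
        rw [Fin.sum_univ_eq_sum_range (fun n => if n ≤ i.val then M ^ (n + 1) else 0) r]
        rw [← Finset.sum_filter]
        congr 1
        ext n
        simp only [Finset.mem_filter, Finset.mem_range, Nat.lt_succ_iff]
        have := i.isLt
        omega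
      rw [hsum1, hsum2]
      have : (Finset.univ.filter
          (fun x => ¬ ∃ j : Fin r, j.val ≤ i.val ∧ c j = x)).card • (1:ℝ) ≤ N := by
        simpa using hcard
      linarith
    have step3 : (∑ j ∈ Finset.range (i.val + 1), M ^ (j + 1)) + N ≤
        M ^ (i.val + 1) + (N + 2) * M ^ i.val := by
      have h1 : ∑ j ∈ Finset.range i.val, M ^ (j + 1) ≤ 2 * M ^ i.val := geo_bound hM2 i.val
      have hp1 : (1:ℝ) ≤ M ^ i.val := one_le_pow₀ (by linarith)
      have h2 : N ≤ N * M ^ i.val := le_mul_of_one_le_right hN0 hp1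
      rw [Finset.sum_range_succ]
      nlinarith
    linarith [step1.trans step2, step3]
  -- per-vertex lower bound on chain vertices
  have hterm : ∀ i : Fin r, 1 - (N + 2) / M ≤ w (c i) / D (c i) := by
    intro i
    have ha : (0:ℝ) < M ^ i.val := pow_pos hM0 _
    have hB : (0:ℝ) < M ^ (i.val + 1) + (N + 2) * M ^ i.val := by positivity
    have h1 : M ^ (i.val + 1) / (M ^ (i.val + 1) + (N + 2) * M ^ i.val) ≤
        w (c i) / D (c i) := by
      rw [hwc i]
      exact div_le_div_of_nonneg_left (pow_pos hM0 _).le (hDpos _) (hDle i)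
    refine le_trans ?_ h1
    rw [le_div_iff₀ hB]
    have hq : (N + 2) / M * M = N + 2 := div_mul_cancel₀ _ hM0.ne'
    have hqnn : 0 ≤ (N + 2) / M := by positivity
    have hpow : M ^ (i.val + 1) = M ^ i.val * M := pow_succ M i.val
    nlinarith [mul_nonneg hqnn (mul_nonneg (by linarith : (0:ℝ) ≤ N + 2) ha.le), ha]
  -- sum it all up
  have hsum : (r : ℝ) * (1 - (N + 2) / M) ≤ ∑ v, w v / D v := by
    have h1 : ∑ i : Fin r, w (c i) / D (c i) ≤ ∑ v, w v / D v := by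
      have him := Finset.sum_image (s := (Finset.univ : Finset (Fin r))) (g := c)
        (f := fun v => w v / D v) (fun a _ b _ h => hcinj h)
      rw [← him]
      exact Finset.sum_le_sum_of_subset_of_nonneg (Finset.subset_univ _)
        (fun v _ _ => div_nonneg (hwpos v).le (hDpos v).le)
    have h2 : (r : ℝ) * (1 - (N + 2) / M) ≤ ∑ i : Fin r, w (c i) / D (c i) := by
      calc (r : ℝ) * (1 - (N + 2) / M) = ∑ _i : Fin r, (1 - (N + 2) / M) := by
            rw [Finset.sum_const, Finset.card_univ, Fintype.card_fin, nsmul_eq_mul]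
        _ ≤ _ := Finset.sum_le_sum fun i _ => hterm i
    linarith
  have : (r : ℝ) + ε < (r : ℝ) * (1 - (N + 2) / M) := by
    have hexp : (r : ℝ) * (1 - (N + 2) / M) = (r : ℝ) - (r : ℝ) * (N + 2) / M := by
      ring
    rw [hexp]
    linarith
  linarith


/-- for every finite directed graph with all self-loops, the maximum acyclic
subgraph number `λ(G)` equals the supremum over positive vertex weightings `f` of
`∑_v f v / ∑_{w ∈ I(v)} f w`, where `I(v)` is the in-neighborhood of `v`. -/
theorem acyclicNumber_eq_sup_weighting (V : Type*) [Fintype V]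
    (adj : V → V → Prop) [DecidableRel adj] (hrefl : ∀ v, adj v v) :
    (acyclicNumber adj : ℝ) =
      sSup {x : ℝ | ∃ f : V → ℝ, (∀ v, 0 < f v) ∧
        x = ∑ v, f v / ∑ w ∈ Finset.univ.filter (fun w => adj w v), f w} :=
  acyclicNumber_eq_sup_weighting' V adj hrefl
end

section
/- For every finite directed graph G with all self-loops on a finite vertex set V, the chain of inequalities ι(G) ≤ ν₂(G) ≤ λ(G) ≤ κ(G) holds, where ι(G) is the independence number, ν₂(G) is defined below, λ(G) is the maximum acyclic subgraph number, and κ(G) is the clique covering number. -/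
open Finset

/-- The independence number `ι(G)`: the largest `r` such that there are `r` distinct
vertices with no edge between any two distinct ones. -/
noncomputable def indepNumber {V : Type*} [Fintype V] (adj : V → V → Prop) : ℕ :=
  sSup {r : ℕ | ∃ f : Fin r → V, Function.Injective f ∧
    ∀ i j : Fin r, i ≠ j → ¬ adj (f i) (f j)}

/-- The clique covering number `κ(G)`: the least `r` such that the vertices can be
labelled by `Fin r` with every pair of equally-labelled vertices joined by an edge
(equivalently, the least size of a partition of `V` into subcliques). -/
noncomputable def cliqueCoverNumber {V : Type*} [Fintype V] (adj : V → V → Prop) : ℕ :=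
  sInf {r : ℕ | ∃ P : V → Fin r, ∀ u v, P u = P v → adj u v}

/-- The quantity `ν₂(G)`: the supremum over positive vertex weightings `f` summing to 1 of
`(∑_v f v / √(∑_{w ∈ I(v)} f w))²`. -/
noncomputable def nuTwo {V : Type*} [Fintype V] (adj : V → V → Prop) [DecidableRel adj] : ℝ :=
  sSup {x : ℝ | ∃ f : V → ℝ, (∀ v, 0 < f v) ∧ (∑ v, f v) = 1 ∧
    x = (∑ v, f v / Real.sqrt (∑ w ∈ Finset.univ.filter (fun w => adj w v), f w)) ^ 2}

/-!
Cauchy–Schwarz gives `(∑ f/√d)² ≤ (∑ f)(∑ f/d)` for the in-weights `d`, and a greedy argument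
(repeatedly keep a vertex of minimal in-weight and delete its in-neighbourhood) produces an
acyclic sequence whose length bounds `∑ f/d`; this is `ν₂ ≤ λ`. For `ι ≤ ν₂`, put weight `1` on a
maximum independent set and `δ` elsewhere and let `δ → 0`. For `λ ≤ κ`, two vertices of an
acyclic sequence never lie in a common subclique.
-/

open Filter Topology

section

variable {V : Type*} (adj : V → V → Prop)

lemma card_le_of_acyclic_of_cliqueLabelling {r k : ℕ} {g : Fin r → V}
    (hacyc : ∀ i j, j < i → ¬ adj (g i) (g j)) {P : V → Fin k}
    (hP : ∀ u v, P u = P v → adj u v) : r ≤ k := by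
  have hinj : Function.Injective (P ∘ g) := by
    intro i j h
    by_contra hne
    rcases lt_or_gt_of_ne hne with hlt | hlt
    · exact hacyc j i hlt (hP _ _ h.symm)
    · exact hacyc i j hlt (hP _ _ h)
  simpa using Fintype.card_le_of_injective _ hinj

section

variable [Fintype V]

lemma bddAbove_setOf_injective_fin (p : ∀ r, (Fin r → V) → Prop) :
    BddAbove {r : ℕ | ∃ g : Fin r → V, Function.Injective g ∧ p r g} :=
  ⟨Fintype.card V, fun _ ⟨g, hg, _⟩ => by simpa using Fintype.card_le_of_injective g hg⟩

lemma exists_injective_fin_sSup (p : ∀ r, (Fin r → V) → Prop) (h0 : ∀ g, p 0 g) :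
    ∃ g : Fin (sSup {r : ℕ | ∃ g : Fin r → V, Function.Injective g ∧ p r g}) → V,
      Function.Injective g ∧ p _ g :=
  Nat.sSup_mem (s := {r | ∃ g : Fin r → V, Function.Injective g ∧ p r g})
    ⟨0, Fin.elim0, fun i => i.elim0, h0 _⟩ (bddAbove_setOf_injective_fin p)

lemma le_acyclicNumber {l : List V} (hl : l.Nodup) (hacyc : l.Pairwise fun v w => ¬ adj w v) :
    l.length ≤ acyclicNumber adj :=
  le_csSup (bddAbove_setOf_injective_fin _)
    ⟨l.get, List.nodup_iff_injective_get.1 hl,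
      fun i j hji => List.pairwise_iff_get.1 hacyc j i hji⟩

theorem acyclicNumber_le_cliqueCoverNumber (hrefl : ∀ v, adj v v) :
    acyclicNumber adj ≤ cliqueCoverNumber adj := by
  obtain ⟨g, -, hacyc⟩ := exists_injective_fin_sSup
    (fun r g => ∀ i j : Fin r, j < i → ¬ adj (g i) (g j)) fun _ i => i.elim0
  refine le_csInf ⟨_, Fintype.equivFin V, fun u v h => ?_⟩ fun k ⟨P, hP⟩ =>
    card_le_of_acyclic_of_cliqueLabelling adj hacyc hP
  exact (Fintype.equivFin V).injective h ▸ hrefl u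

lemma exists_finset_card_indepNumber :
    ∃ R : Finset V, #R = indepNumber adj ∧ (R : Set V).Pairwise fun v w => ¬ adj v w := by
  obtain ⟨g, hg, hindep⟩ := exists_injective_fin_sSup
    (fun r g => ∀ i j : Fin r, i ≠ j → ¬ adj (g i) (g j)) fun _ i => i.elim0
  refine ⟨univ.map ⟨g, hg⟩, by simp [indepNumber], ?_⟩
  simp only [coe_map, coe_univ, Set.image_univ]
  rintro _ ⟨i, rfl⟩ _ ⟨j, rfl⟩ hne
  exact hindep i j (ne_of_apply_ne g hne)

end

variable [DecidableRel adj]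

def inWeight (f : V → ℝ) (S : Finset V) (v : V) : ℝ := ∑ w ∈ S with adj w v, f w

variable {adj}

lemma inWeight_pos (hrefl : ∀ v, adj v v) {f : V → ℝ} (hf : ∀ v, 0 < f v) {S : Finset V}
    {v : V} (hv : v ∈ S) : 0 < inWeight adj f S v :=
  sum_pos (fun w _ => hf w) ⟨v, mem_filter.2 ⟨hv, hrefl v⟩⟩

lemma inWeight_mono {f : V → ℝ} (hf : ∀ v, 0 ≤ f v) {S T : Finset V} (hST : S ⊆ T) (v : V) :
    inWeight adj f S v ≤ inWeight adj f T v :=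
  sum_le_sum_of_subset_of_nonneg (filter_subset_filter _ hST) fun w _ _ => hf w

lemma sum_div_inWeight_le_filter_not_add_one (hrefl : ∀ v, adj v v) {f : V → ℝ}
    (hf : ∀ v, 0 < f v) {S : Finset V} {v₀ : V} (hv₀ : v₀ ∈ S)
    (hmin : ∀ v ∈ S, inWeight adj f S v₀ ≤ inWeight adj f S v) :
    ∑ v ∈ S, f v / inWeight adj f S v ≤
      ∑ v ∈ S with ¬ adj v v₀, f v / inWeight adj f {w ∈ S | ¬ adj w v₀} v + 1 := by
  have hw₀ := inWeight_pos hrefl hf hv₀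
  rw [← sum_filter_not_add_sum_filter S (adj · v₀)]
  refine add_le_add (sum_le_sum fun v hv => ?_) ?_
  · exact div_le_div_of_nonneg_left (hf v).le (inWeight_pos hrefl hf hv)
      (inWeight_mono (fun w => (hf w).le) (filter_subset _ _) v)
  · calc ∑ v ∈ S with adj v v₀, f v / inWeight adj f S v
        ≤ ∑ v ∈ S with adj v v₀, f v / inWeight adj f S v₀ :=
          sum_le_sum fun v hv =>
            div_le_div_of_nonneg_left (hf v).le hw₀ (hmin v (mem_filter.1 hv).1)
      _ = 1 := by rw [← sum_div]; exact div_self hw₀.ne'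

theorem exists_acyclic_list_sum_div_inWeight_le (hrefl : ∀ v, adj v v) {f : V → ℝ}
    (hf : ∀ v, 0 < f v) (S : Finset V) :
    ∃ l : List V, l.Nodup ∧ (∀ v ∈ l, v ∈ S) ∧ l.Pairwise (fun v w => ¬ adj w v) ∧
      ∑ v ∈ S, f v / inWeight adj f S v ≤ l.length := by
  induction S using Finset.strongInduction with
  | _ S ih =>
  rcases S.eq_empty_or_nonempty with rfl | hS
  · exact ⟨[], by simp⟩
  obtain ⟨v₀, hv₀, hmin⟩ := S.exists_min_image (inWeight adj f S) hS
  have hv₀T : v₀ ∉ {w ∈ S | ¬ adj w v₀} := fun h => (mem_filter.1 h).2 (hrefl v₀)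
  obtain ⟨l, hnd, hlT, hacyc, hsum⟩ :=
    ih _ ((filter_subset _ S).ssubset_of_not_subset fun h => hv₀T (h hv₀))
  refine ⟨v₀ :: l, List.nodup_cons.2 ⟨fun h => hv₀T (hlT _ h), hnd⟩, ?_, ?_, ?_⟩
  · simpa [hv₀] using fun v hv => (mem_filter.1 (hlT v hv)).1
  · exact List.pairwise_cons.2 ⟨fun w hw => (mem_filter.1 (hlT w hw)).2, hacyc⟩
  · rw [List.length_cons, Nat.cast_succ]
    linarith [sum_div_inWeight_le_filter_not_add_one hrefl hf hv₀ hmin]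

variable [Fintype V]

lemma sum_div_inWeight_le_acyclicNumber (hrefl : ∀ v, adj v v) {f : V → ℝ}
    (hf : ∀ v, 0 < f v) : ∑ v, f v / inWeight adj f univ v ≤ acyclicNumber adj := by
  obtain ⟨l, hnd, -, hacyc, hsum⟩ := exists_acyclic_list_sum_div_inWeight_le hrefl hf univ
  exact hsum.trans (by exact_mod_cast le_acyclicNumber adj hnd hacyc)

variable (adj) in
noncomputable def nuTwoObjective (f : V → ℝ) : ℝ := (∑ v, f v / √(inWeight adj f univ v)) ^ 2

lemma nuTwoObjective_div_sum_le_sum_div_inWeight (hrefl : ∀ v, adj v v) {f : V → ℝ}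
    (hf : ∀ v, 0 < f v) :
    nuTwoObjective adj f / ∑ v, f v ≤ ∑ v, f v / inWeight adj f univ v := by
  refine (sq_sum_div_le_sum_sq_div univ _ fun v _ => hf v).trans_eq
    (sum_congr rfl fun v _ => ?_)
  have hw := inWeight_pos hrefl hf (mem_univ v)
  rw [div_pow, Real.sq_sqrt hw.le]
  field_simp [(hf v).ne']

lemma nuTwoObjective_smul {c : ℝ} (hc : 0 ≤ c) (f : V → ℝ) :
    nuTwoObjective adj (c • f) = c * nuTwoObjective adj f := by
  have hw : ∀ v, inWeight adj (c • f) univ v = c * inWeight adj f univ v := fun v => by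
    simp [inWeight, mul_sum]
  have hterm : ∀ v, (c • f) v / √(inWeight adj (c • f) univ v) =
      √c * (f v / √(inWeight adj f univ v)) := fun v => by
    rw [hw, Real.sqrt_mul hc, Pi.smul_apply, smul_eq_mul, mul_div_mul_comm, Real.div_sqrt]
  simp only [nuTwoObjective, hterm, ← mul_sum, mul_pow, Real.sq_sqrt hc]

lemma nuTwoObjective_le_acyclicNumber (hrefl : ∀ v, adj v v) {f : V → ℝ}
    (hf : ∀ v, 0 < f v) (hsum : ∑ v, f v = 1) : nuTwoObjective adj f ≤ acyclicNumber adj := by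
  simpa [hsum] using (nuTwoObjective_div_sum_le_sum_div_inWeight hrefl hf).trans
    (sum_div_inWeight_le_acyclicNumber hrefl hf)

theorem nuTwo_le_acyclicNumber (hrefl : ∀ v, adj v v) : nuTwo adj ≤ acyclicNumber adj :=
  Real.sSup_le (fun _ ⟨_, hf, hsum, hx⟩ => hx ▸ nuTwoObjective_le_acyclicNumber hrefl hf hsum)
    (Nat.cast_nonneg _)

lemma nuTwo_nonneg : 0 ≤ nuTwo adj :=
  Real.sSup_nonneg fun _ ⟨_, _, _, hx⟩ => hx ▸ sq_nonneg _

lemma nuTwoObjective_div_sum_le_nuTwo [Nonempty V] (hrefl : ∀ v, adj v v) {f : V → ℝ}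
    (hf : ∀ v, 0 < f v) : nuTwoObjective adj f / ∑ v, f v ≤ nuTwo adj := by
  have hs : 0 < ∑ v, f v := sum_pos (fun v _ => hf v) univ_nonempty
  have hg : ∀ v, 0 < ((∑ v, f v)⁻¹ • f) v := fun v => mul_pos (inv_pos.2 hs) (hf v)
  have hgsum : ∑ v, ((∑ v, f v)⁻¹ • f) v = 1 := by
    simp only [Pi.smul_apply, smul_eq_mul, ← mul_sum, inv_mul_cancel₀ hs.ne']
  refine le_csSup ⟨acyclicNumber adj, ?_⟩ ⟨_, hg, hgsum, ?_⟩
  · rintro _ ⟨g, hg_pos, hg_sum, rfl⟩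
    exact nuTwoObjective_le_acyclicNumber hrefl hg_pos hg_sum
  · exact ((nuTwoObjective_smul (inv_nonneg.2 hs.le) f).trans (inv_mul_eq_div _ _)).symm

lemma sq_card_div_le_nuTwo_of_pairwise [DecidableEq V] [Nonempty V] (hrefl : ∀ v, adj v v)
    {R : Finset V} (hR : (R : Set V).Pairwise fun v w => ¬ adj v w) {δ : ℝ} (hδ : 0 < δ) :
    (#R : ℝ) ^ 2 / ((#R + #Rᶜ * δ) * (1 + #Rᶜ * δ)) ≤ nuTwo adj := by
  set u : V → ℝ := fun v => if v ∈ R then 1 else δ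
  have hu : ∀ v, 0 < u v := fun v => by by_cases hv : v ∈ R <;> simp [u, hv, hδ]
  have hsum : ∑ v, u v = #R + #Rᶜ * δ := by simp [u, sum_ite, ← compl_filter]
  have hw : ∀ v ∈ R, inWeight adj u univ v ≤ 1 + #Rᶜ * δ := by
    intro v hv
    have hsub : ({w | adj w v} : Finset V) ⊆ insert v Rᶜ := by
      intro w hw
      by_cases hwR : w ∈ R
      · exact mem_insert.2 (.inl (hR.eq hwR hv (not_not.2 (mem_filter.1 hw).2)))
      · exact mem_insert_of_mem (mem_compl.2 hwR)
    calc inWeight adj u univ v ≤ ∑ w ∈ insert v Rᶜ, u w :=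
          sum_le_sum_of_subset_of_nonneg hsub fun w _ _ => (hu w).le
      _ = 1 + #Rᶜ * δ := by
          simp only [u]
          rw [sum_insert (by simpa using hv), if_pos hv,
            sum_congr rfl fun w hw => if_neg (mem_compl.1 hw), sum_const, nsmul_eq_mul]
  have hsqrt : (#R : ℝ) / √(1 + #Rᶜ * δ) ≤ ∑ v, u v / √(inWeight adj u univ v) :=
    calc (#R : ℝ) / √(1 + #Rᶜ * δ) = ∑ v ∈ R, 1 / √(1 + #Rᶜ * δ) := by
          rw [sum_const, nsmul_eq_mul, mul_one_div]
      _ ≤ ∑ v ∈ R, u v / √(inWeight adj u univ v) := sum_le_sum fun v hv => by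
          rw [show u v = 1 from if_pos hv]
          exact div_le_div_of_nonneg_left zero_le_one
            (Real.sqrt_pos.2 (inWeight_pos hrefl hu (mem_univ v))) (Real.sqrt_le_sqrt (hw v hv))
      _ ≤ ∑ v, u v / √(inWeight adj u univ v) :=
          sum_le_sum_of_subset_of_nonneg (subset_univ R) fun v _ _ =>
            div_nonneg (hu v).le (Real.sqrt_nonneg _)
  calc (#R : ℝ) ^ 2 / ((#R + #Rᶜ * δ) * (1 + #Rᶜ * δ))
      = ((#R : ℝ) / √(1 + #Rᶜ * δ)) ^ 2 / ∑ v, u v := by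
        rw [hsum, div_pow, Real.sq_sqrt (by positivity), div_div, mul_comm (1 + _)]
    _ ≤ nuTwoObjective adj u / ∑ v, u v := by
        gcongr
        exact pow_le_pow_left₀ (by positivity) hsqrt 2
    _ ≤ nuTwo adj := nuTwoObjective_div_sum_le_nuTwo hrefl hu

theorem indepNumber_le_nuTwo (hrefl : ∀ v, adj v v) : (indepNumber adj : ℝ) ≤ nuTwo adj := by
  classical
  obtain ⟨R, hcard, hR⟩ := exists_finset_card_indepNumber adj
  rw [← hcard]
  rcases R.eq_empty_or_nonempty with rfl | hne
  · simpa using nuTwo_nonneg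
  have : Nonempty V := ⟨hne.choose⟩
  have hr : (0 : ℝ) < #R := by exact_mod_cast hne.card_pos
  have hlim : Tendsto (fun δ : ℝ => (#R : ℝ) ^ 2 / ((#R + #Rᶜ * δ) * (1 + #Rᶜ * δ)))
      (𝓝[>] 0) (𝓝 (#R : ℝ)) := by
    refine tendsto_nhdsWithin_of_tendsto_nhds ?_
    have hcont : ContinuousAt (fun δ : ℝ => (#R : ℝ) ^ 2 / ((#R + #Rᶜ * δ) * (1 + #Rᶜ * δ))) 0 :=
      by fun_prop (disch := simp [hr.ne'])
    simpa [sq, hr.ne'] using hcont.tendsto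
  refine le_of_tendsto hlim ?_
  filter_upwards [self_mem_nhdsWithin] with δ hδ using
    sq_card_div_le_nuTwo_of_pairwise hrefl hR hδ

end

/-- for every finite directed graph with all self-loops,
`ι(G) ≤ ν₂(G) ≤ λ(G) ≤ κ(G)`. -/
theorem graph_invariants_chain (V : Type*) [Fintype V]
    (adj : V → V → Prop) [DecidableRel adj] (hrefl : ∀ v, adj v v) :
    (indepNumber adj : ℝ) ≤ nuTwo adj ∧
      nuTwo adj ≤ (acyclicNumber adj : ℝ) ∧
      acyclicNumber adj ≤ cliqueCoverNumber adj :=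
  ⟨indepNumber_le_nuTwo hrefl, nuTwo_le_acyclicNumber hrefl,
    acyclicNumber_le_cliqueCoverNumber adj hrefl⟩
end

section
/- For every ε ∈ (0, 1/2) and every T ≥ 1 there exists a number of contexts C and an instance of the contextual bandits problem with cross-learning with K = 2 actions such that every randomized learning algorithm A satisfies E[Reg_Post(A)] ≥ (1/2 − ε)·T. The instance: contexts c_1, …, c_T are drawn i.i.d. uniformly from [C], and independently, for each pair (t, c), with probability 1/2 the rewards are (r_{1,t}(c), r_{2,t}(c)) = (1, 0) and with probability 1/2 they are (0, 1). Here Reg_Post(A) = Σ_{t=1}^T r_{π_Post(c_t),t}(c_t) − Σ_{t=1}^T r_{I_t,t}(c_t), where π_Post(c) = argmax_{i} Σ_{t=1}^T r_{i,t}(c)·1{c_t = c} is the best stationary policy in hindsight. -/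
open MeasureTheory ProbabilityTheory
open scoped Classical

/-!
The learner's reward in round `t` has mean `1/2`: flipping the coin of the pair `(t, c_t)` is
a measure-preserving involution that the learner cannot see before round `t` and that swaps
its two possible rewards. The hindsight-optimal policy, on the other hand, earns `1` in every
round whose context occurs in no other round, because in such a context it is optimal for a
single round; and a round shares its context with another one with probability at most
`(T - 1) / C`. Hence the expected ex-post regret is at least `T (1/2 - (T - 1) / C)`, and it
suffices to take `C > T / ε`.
-/

/-- Rewards of the hard ex-post instance with `K = 2` arms: if the coin is `true` then
arm `0` has reward `1` and arm `1` reward `0`, and vice versa otherwise. -/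
noncomputable def rfEP (i : Fin 2) (bcoin : Bool) : ℝ :=
  if i = 0 then (if bcoin then 1 else 0) else (if bcoin then 0 else 1)

lemma rfEP_nonneg (j : Fin 2) (b : Bool) : 0 ≤ rfEP j b := by
  unfold rfEP; split_ifs <;> norm_num

lemma rfEP_le_one (j : Fin 2) (b : Bool) : rfEP j b ≤ 1 := by
  unfold rfEP; split_ifs <;> norm_num

lemma rfEP_not (j : Fin 2) (b : Bool) : rfEP j (!b) = 1 - rfEP j b := by
  unfold rfEP; split_ifs <;> cases b <;> simp_all

lemma exists_rfEP_eq_one (b : Bool) : ∃ j, rfEP j b = 1 :=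
  ⟨if b then 0 else 1, by cases b <;> simp [rfEP]⟩

lemma measurable_rfEP_comp {β : Type*} [MeasurableSpace β] {a : β → Fin 2} {b : β → Bool}
    (ha : Measurable a) (hb : Measurable b) : Measurable fun q => rfEP (a q) (b q) :=
  (measurable_of_countable fun p : Fin 2 × Bool => rfEP p.1 p.2).comp (ha.prodMk hb)

lemma integrable_rfEP_comp {β : Type*} [MeasurableSpace β] {ρ : Measure β} [IsFiniteMeasure ρ]
    {a : β → Fin 2} {b : β → Bool} (ha : Measurable a) (hb : Measurable b) :
    Integrable (fun q => rfEP (a q) (b q)) ρ :=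
  Integrable.of_bound (measurable_rfEP_comp ha hb).aestronglyMeasurable 1 <| ae_of_all _ fun q => by
    rw [Real.norm_of_nonneg (rfEP_nonneg _ _)]
    exact rfEP_le_one _ _

section Uniform

variable {α : Type*} [Fintype α] [MeasurableSpace α]

lemma isProbabilityMeasure_inv_card_smul_count [Nonempty α] :
    IsProbabilityMeasure ((Fintype.card α : ENNReal)⁻¹ • Measure.count : Measure α) := by
  constructor
  rw [Measure.smul_apply, Measure.count_univ, ENat.card_eq_coe_fintype_card, ENat.toENNReal_coe,
    smul_eq_mul, ENNReal.inv_mul_cancel (by simp) (by simp)]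

lemma integral_comp_perm_of_measureReal_singleton [MeasurableSingletonClass α] {μ : Measure α}
    [IsFiniteMeasure μ] {w : ℝ} (hμ : ∀ x, μ.real {x} = w) (e : Equiv.Perm α)
    (f : α → ℝ) :
    ∫ x, f (e x) ∂μ = ∫ x, f x ∂μ := by
  simp only [integral_fintype Integrable.of_finite, hμ]
  exact Equiv.sum_comp e fun x => w • f x

end Uniform

lemma le_integral_prod_of_forall_le {S α : Type*} [MeasurableSpace S] [MeasurableSpace α]
    {ν : Measure S} [IsProbabilityMeasure ν] {μ : Measure α} [SFinite μ] {f : S × α → ℝ}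
    (hf : Integrable f (ν.prod μ)) {a : ℝ} (h : ∀ s, a ≤ ∫ x, f (s, x) ∂μ) :
    a ≤ ∫ q, f q ∂ν.prod μ := by
  rw [integral_prod f hf]
  calc a = ∫ _, a ∂ν := by simp
    _ ≤ _ := integral_mono (integrable_const a) hf.integral_prod_left h

abbrev Outcome (T C : ℕ) := (Fin T → Fin C) × (Fin T → Fin C → Bool)

noncomputable def hardInstance (T C : ℕ) : Measure (Outcome T C) :=
  (Measure.pi fun _ : Fin T => ((C : ENNReal)⁻¹ • Measure.count : Measure (Fin C))).prod
    (Measure.pi fun _ : Fin T =>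
      Measure.pi fun _ : Fin C => ((2 : ENNReal)⁻¹ • Measure.count : Measure Bool))

variable {T C : ℕ}

instance [NeZero C] :
    IsProbabilityMeasure ((C : ENNReal)⁻¹ • Measure.count : Measure (Fin C)) := by
  simpa using isProbabilityMeasure_inv_card_smul_count (α := Fin C)

instance : IsProbabilityMeasure ((2 : ENNReal)⁻¹ • Measure.count : Measure Bool) := by
  simpa using isProbabilityMeasure_inv_card_smul_count (α := Bool)

instance [NeZero C] : IsProbabilityMeasure (hardInstance T C) := by
  unfold hardInstance; infer_instance

lemma hardInstance_real_singleton [NeZero C] (x : Outcome T C) :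
    (hardInstance T C).real {x}
      = ((C : ENNReal)⁻¹ ^ T * ((2 : ENNReal)⁻¹ ^ C) ^ T).toReal := by
  rw [Measure.real, hardInstance, ← Set.singleton_prod_singleton, Measure.prod_prod,
    ← Set.univ_pi_singleton, Measure.pi_pi, ← Set.univ_pi_singleton x.2, Measure.pi_pi]
  simp [← Set.univ_pi_singleton, Measure.pi_pi]

noncomputable def collisions (x : Outcome T C) (t : Fin T) : ℝ :=
  ∑ u ∈ Finset.univ.erase t, if x.1 u = x.1 t then 1 else 0

def IsBestInHindsight (π : Fin C → Fin 2) (x : Outcome T C) : Prop :=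
  ∀ (c : Fin C) (j : Fin 2),
    ∑ t : Fin T, (if x.1 t = c then rfEP j (x.2 t c) else 0)
      ≤ ∑ t : Fin T, (if x.1 t = c then rfEP (π c) (x.2 t c) else 0)

lemma one_sub_collisions_le_rfEP {π : Fin C → Fin 2} {x : Outcome T C}
    (hπ : IsBestInHindsight π x) (t : Fin T) :
    1 - collisions x t ≤ rfEP (π (x.1 t)) (x.2 t (x.1 t)) := by
  by_cases hlonely : ∀ u ∈ Finset.univ.erase t, x.1 u ≠ x.1 t
  · -- round `t` is the only one with context `x.1 t`, so `π` must pick its winning arm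
    have hsum (j : Fin 2) :
        ∑ u, (if x.1 u = x.1 t then rfEP j (x.2 u (x.1 t)) else 0) = rfEP j (x.2 t (x.1 t)) := by
      rw [Finset.sum_eq_single t (fun u _ hu => if_neg (hlonely u (by simpa using hu))) (by simp),
        if_pos rfl]
    obtain ⟨j, hj⟩ := exists_rfEP_eq_one (x.2 t (x.1 t))
    have hwin := hπ (x.1 t) j
    rw [hsum, hsum, hj] at hwin
    have : 0 ≤ collisions x t := Finset.sum_nonneg fun _ _ => by positivity
    linarith
  · push Not at hlonely
    obtain ⟨u, hu, hcol⟩ := hlonely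
    have : 1 ≤ collisions x t := by
      calc (1 : ℝ) = if x.1 u = x.1 t then 1 else 0 := (if_pos hcol).symm
        _ ≤ collisions x t :=
          Finset.single_le_sum (f := fun u => if x.1 u = x.1 t then (1 : ℝ) else 0)
            (fun _ _ => by positivity) hu
    linarith [rfEP_nonneg (π (x.1 t)) (x.2 t (x.1 t))]

lemma integral_ite_context_eq [NeZero C] {u t : Fin T} (hut : u ≠ t) :
    ∫ x, (if x.1 u = x.1 t then (1 : ℝ) else 0) ∂hardInstance T C = (C : ℝ)⁻¹ := by
  -- shifting the context of round `u` by `k` preserves the measure; exactly one shift collides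
  have hshift (k : Fin C) : ∫ x, (if x.1 u + k = x.1 t then (1 : ℝ) else 0) ∂hardInstance T C
      = ∫ x, (if x.1 u = x.1 t then (1 : ℝ) else 0) ∂hardInstance T C := by
    have := integral_comp_perm_of_measureReal_singleton hardInstance_real_singleton
      ((Equiv.addRight (Pi.single u k)).prodCongr (Equiv.refl _))
      fun x : Outcome T C => if x.1 u = x.1 t then (1 : ℝ) else 0
    simpa [Pi.single_apply, hut.symm] using this
  have hsum : ∑ k : Fin C, ∫ x, (if x.1 u + k = x.1 t then (1 : ℝ) else 0) ∂hardInstance T C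
      = 1 := by
    rw [← integral_finsetSum _ fun _ _ => Integrable.of_finite]
    simp [← eq_sub_iff_add_eq']
  simp only [hshift, Finset.sum_const, Finset.card_univ, Fintype.card_fin, nsmul_eq_mul] at hsum
  exact eq_inv_of_mul_eq_one_right hsum

lemma integral_collisions [NeZero C] (t : Fin T) :
    ∫ x, collisions x t ∂hardInstance T C = (T - 1) / C := by
  unfold collisions
  rw [integral_finsetSum _ fun _ _ => Integrable.of_finite,
    Finset.sum_congr rfl fun u hu => integral_ite_context_eq (Finset.ne_of_mem_erase hu),
    Finset.sum_const, Finset.card_erase_of_mem (Finset.mem_univ t), Finset.card_univ,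
    Fintype.card_fin, nsmul_eq_mul, Nat.cast_pred t.pos, div_eq_mul_inv]

def IsAdaptedToCrossLearning (A : Outcome T C → Fin T → Fin 2) : Prop :=
  ∀ x x' (t : Fin T),
    (∀ u : Fin T, u ≤ t → x.1 u = x'.1 u) →
    (∀ u : Fin T, u < t → ∀ c : Fin C, rfEP (A x u) (x.2 u c) = rfEP (A x u) (x'.2 u c)) →
    A x t = A x' t

noncomputable def flipCoin (t : Fin T) (x : Outcome T C) : Outcome T C :=
  (x.1, fun u c => if u = t ∧ c = x.1 t then !x.2 u c else x.2 u c)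

lemma flipCoin_involutive (t : Fin T) : Function.Involutive (flipCoin (C := C) t) := by
  rintro ⟨f, g⟩
  ext u c
  · rfl
  · by_cases h : u = t ∧ c = f t <;> simp [flipCoin, h]

lemma integral_rfEP_eq_half [NeZero C] {A : Outcome T C → Fin T → Fin 2}
    (hA : IsAdaptedToCrossLearning A) (t : Fin T) :
    ∫ x, rfEP (A x t) (x.2 t (x.1 t)) ∂hardInstance T C = 1 / 2 := by
  have hflip (x : Outcome T C) :
      rfEP (A (flipCoin t x) t) ((flipCoin t x).2 t ((flipCoin t x).1 t))
        = 1 - rfEP (A x t) (x.2 t (x.1 t)) := by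
    have hsame : A (flipCoin t x) t = A x t :=
      (hA x (flipCoin t x) t (fun _ _ => rfl) fun u hu c => by
        rw [show (flipCoin t x).2 u c = x.2 u c from if_neg fun h => hu.ne h.1]).symm
    rw [hsame]
    simp [flipCoin, rfEP_not]
  have := integral_comp_perm_of_measureReal_singleton hardInstance_real_singleton
    (flipCoin_involutive t).toPerm fun x => rfEP (A x t) (x.2 t (x.1 t))
  simp only [Function.Involutive.coe_toPerm, hflip] at this
  rw [integral_sub (integrable_const 1) Integrable.of_finite, integral_const, probReal_univ,
    smul_eq_mul, mul_one] at this
  linarith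

lemma le_integral_round_regret [NeZero C] {π : Outcome T C → Fin C → Fin 2}
    (hπ : ∀ x, IsBestInHindsight (π x) x) {A : Outcome T C → Fin T → Fin 2}
    (hA : IsAdaptedToCrossLearning A) (t : Fin T) :
    1 / 2 - (T - 1) / C ≤ ∫ x, (rfEP (π x (x.1 t)) (x.2 t (x.1 t))
      - rfEP (A x t) (x.2 t (x.1 t))) ∂hardInstance T C := by
  have hbench := integral_mono (μ := hardInstance T C) Integrable.of_finite Integrable.of_finite
    fun x => one_sub_collisions_le_rfEP (hπ x) t
  rw [integral_sub (integrable_const 1) Integrable.of_finite, integral_const, probReal_univ,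
    smul_eq_mul, mul_one, integral_collisions] at hbench
  rw [integral_sub Integrable.of_finite Integrable.of_finite, integral_rfEP_eq_half hA]
  linarith

theorem expost_regret_lower_bound_general (ε : ℝ) (hε0 : 0 < ε) (T : ℕ) :
    ∃ C : ℕ, 1 ≤ C ∧
      -- the instance: contexts i.i.d. uniform on Fin C, and an independent fair coin for
      -- every (round, context) pair determining which arm has reward 1
      (let μ : Measure ((Fin T → Fin C) × (Fin T → Fin C → Bool)) :=
        (Measure.pi fun _ : Fin T => ((C : ENNReal)⁻¹ • Measure.count : Measure (Fin C))).prod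
          (Measure.pi fun _ : Fin T =>
            Measure.pi fun _ : Fin C => ((2 : ENNReal)⁻¹ • Measure.count : Measure Bool))
      IsProbabilityMeasure μ ∧
      ∀ (S : Type) (_ : MeasurableSpace S) (ν : Measure S), IsProbabilityMeasure ν →
      ∀ (I : S → ((Fin T → Fin C) × (Fin T → Fin C → Bool)) → Fin T → Fin 2)
        (πP : ((Fin T → Fin C) × (Fin T → Fin C → Bool)) → Fin C → Fin 2),
        -- measurability of the algorithm
        (∀ t : Fin T,
          Measurable (fun q : S × ((Fin T → Fin C) × (Fin T → Fin C → Bool)) =>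
            I q.1 q.2 t)) →
        -- adaptedness: the action at round t depends only on the contexts observed up to
        -- round t and the reward vectors revealed by cross-learning in earlier rounds
        (∀ s x x' (t : Fin T),
          (∀ u : Fin T, u ≤ t → x.1 u = x'.1 u) →
          (∀ u : Fin T, u < t → ∀ c : Fin C,
            rfEP (I s x u) (x.2 u c) = rfEP (I s x u) (x'.2 u c)) →
          I s x t = I s x' t) →
        -- πP is the best stationary policy in hindsight
        (∀ x (c : Fin C) (j : Fin 2),
          ∑ t : Fin T, (if x.1 t = c then rfEP j (x.2 t c) else 0)
            ≤ ∑ t : Fin T, (if x.1 t = c then rfEP (πP x c) (x.2 t c) else 0)) →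
        (1/2 - ε) * T ≤
          ∫ q, ((∑ t : Fin T, rfEP (πP q.2 (q.2.1 t)) (q.2.2 t (q.2.1 t)))
              - ∑ t : Fin T, rfEP (I q.1 q.2 t) (q.2.2 t (q.2.1 t))) ∂(ν.prod μ)) := by
  obtain ⟨C, hCdef⟩ : ∃ C : ℕ, C = ⌈T / ε⌉₊ + 1 := ⟨_, rfl⟩
  have : NeZero C := ⟨by omega⟩
  have hC : (T - 1 : ℝ) / C ≤ ε := by
    rw [div_le_iff₀ (Nat.cast_pos.2 (NeZero.pos C)), hCdef, Nat.cast_add_one]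
    have := (div_le_iff₀ hε0).1 (Nat.le_ceil (T / ε))
    nlinarith
  refine ⟨C, by omega, (inferInstance : IsProbabilityMeasure (hardInstance T C)),
    fun S _ ν _ I πP hI hA hπ => ?_⟩
  have hcoin (t : Fin T) : Measurable fun q : S × Outcome T C => q.2.2 t (q.2.1 t) :=
    (measurable_of_countable fun x : Outcome T C => x.2 t (x.1 t)).comp measurable_snd
  have hround_integrable (t : Fin T) : Integrable (fun q : S × Outcome T C =>
      rfEP (πP q.2 (q.2.1 t)) (q.2.2 t (q.2.1 t)) - rfEP (I q.1 q.2 t) (q.2.2 t (q.2.1 t)))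
      (ν.prod (hardInstance T C)) :=
    (integrable_rfEP_comp
      ((measurable_of_countable fun x => πP x (x.1 t)).comp measurable_snd) (hcoin t)).sub
      (integrable_rfEP_comp (hI t) (hcoin t))
  calc
    (1 / 2 - ε) * T = ∑ t : Fin T, (1 / 2 - ε) := by
      rw [Finset.sum_const, Finset.card_fin, nsmul_eq_mul, mul_comm]
    _ ≤ ∑ t : Fin T, ∫ q, (rfEP (πP q.2 (q.2.1 t)) (q.2.2 t (q.2.1 t))
          - rfEP (I q.1 q.2 t) (q.2.2 t (q.2.1 t))) ∂ν.prod (hardInstance T C) :=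
      Finset.sum_le_sum fun t _ => le_integral_prod_of_forall_le (hround_integrable t) fun s => by
        linarith [le_integral_round_regret hπ (hA s) t]
    _ = _ := by
      rw [← integral_finsetSum _ fun t _ => hround_integrable t]
      simp_rw [Finset.sum_sub_distrib]
      rfl

/-- no algorithm can have small ex-post regret in contextual bandits with
cross-learning.  For every `ε ∈ (0,1/2)` and `T ≥ 1` there is a number of contexts `C`
such that, for the instance in which the contexts are i.i.d. uniform on `Fin C` and,
independently for every pair (round, context), the reward vector of the two arms is
`(1,0)` or `(0,1)` with probability `1/2` each, every randomized algorithm `A` has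
`E[Reg_Post(A)] ≥ (1/2 − ε)·T`, the benchmark being the best stationary policy in
hindsight. -/
theorem expost_regret_lower_bound (ε : ℝ) (hε0 : 0 < ε) (hε : ε < 1/2) (T : ℕ) (hT : 1 ≤ T) :
    ∃ C : ℕ, 1 ≤ C ∧
      -- the instance: contexts i.i.d. uniform on Fin C, and an independent fair coin for
      -- every (round, context) pair determining which arm has reward 1
      (let μ : Measure ((Fin T → Fin C) × (Fin T → Fin C → Bool)) :=
        (Measure.pi fun _ : Fin T => ((C : ENNReal)⁻¹ • Measure.count : Measure (Fin C))).prod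
          (Measure.pi fun _ : Fin T =>
            Measure.pi fun _ : Fin C => ((2 : ENNReal)⁻¹ • Measure.count : Measure Bool))
      IsProbabilityMeasure μ ∧
      ∀ (S : Type) (_ : MeasurableSpace S) (ν : Measure S), IsProbabilityMeasure ν →
      ∀ (I : S → ((Fin T → Fin C) × (Fin T → Fin C → Bool)) → Fin T → Fin 2)
        (πP : ((Fin T → Fin C) × (Fin T → Fin C → Bool)) → Fin C → Fin 2),
        -- measurability of the algorithm
        (∀ t : Fin T,
          Measurable (fun q : S × ((Fin T → Fin C) × (Fin T → Fin C → Bool)) =>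
            I q.1 q.2 t)) →
        -- adaptedness: the action at round t depends only on the contexts observed up to
        -- round t and the reward vectors revealed by cross-learning in earlier rounds
        (∀ s x x' (t : Fin T),
          (∀ u : Fin T, u ≤ t → x.1 u = x'.1 u) →
          (∀ u : Fin T, u < t → ∀ c : Fin C,
            rfEP (I s x u) (x.2 u c) = rfEP (I s x u) (x'.2 u c)) →
          I s x t = I s x' t) →
        -- πP is the best stationary policy in hindsight
        (∀ x (c : Fin C) (j : Fin 2),
          ∑ t : Fin T, (if x.1 t = c then rfEP j (x.2 t c) else 0)
            ≤ ∑ t : Fin T, (if x.1 t = c then rfEP (πP x c) (x.2 t c) else 0)) →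
        (1/2 - ε) * T ≤
          ∫ q, ((∑ t : Fin T, rfEP (πP q.2 (q.2.1 t)) (q.2.2 t (q.2.1 t)))
              - ∑ t : Fin T, rfEP (I q.1 q.2 t) (q.2.2 t (q.2.1 t))) ∂(ν.prod μ)) :=
  expost_regret_lower_bound_general ε hε0 T
end

section
/- Let rewards r_{i,t}(c) ∈ [0,1] for i ∈ [K], t ∈ [T], c ∈ [C] be fixed, and let contexts c_1, …, c_T be drawn i.i.d. from a distribution D on [C]. Define π_Ante(c) = argmax_{i ∈ [K]} Σ_{t=1}^T r_{i,t}(c) and π_Post(c) = argmax_{i ∈ [K]} Σ_{t=1}^T r_{i,t}(c)·1{c_t = c}. For each context c let Δ_c = min_{i ≠ π_Ante(c)} (1/T)·Σ_{t=1}^T (r_{π_Ante(c),t}(c) − r_{i,t}(c)), and let M = min_{c ∈ [C]} D(c)·Δ_c. If M ≥ √(2·log(T·C·K)/T), then E[Σ_{t=1}^T r_{π_Post(c_t),t}(c_t)] − E[Σ_{t=1}^T r_{π_Ante(c_t),t}(c_t)] ≤ 1; equivalently, for any algorithm the expected ex-ante regret and the expected ex-post regret differ by at most 1. -/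
open MeasureTheory ProbabilityTheory Finset
open scoped Classical

/-!
In each context `c`, the hindsight-optimal arm can differ from `π_Ante c` only when some other
arm `i` collects at least as much hindsight reward in `c`, and then it gains at most `T`.
The hindsight advantage of `π_Ante c` over `i` is a sum of `T` independent `[-1, 1]`-valued
variables with mean `T · D(c) Δ_{c,i} ≥ √(2 T log (TCK))`, so by Hoeffding it is `≤ 0` with
probability at most `1 / (TCK)`. Summing over the `C K` pairs `(c, i)` bounds the expected gain
by `1`.
-/

theorem exp_neg_sq_div_le_inv {T N Δ : ℝ} (hT : 0 < T) (hN : 0 < N)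
    (hΔ : √(2 * Real.log N / T) ≤ Δ) :
    Real.exp (-(T * Δ) ^ 2 / (2 * T)) ≤ 1 / N := by
  obtain ⟨-, hsq⟩ := Real.sqrt_le_iff.mp hΔ
  rw [div_le_iff₀ hT] at hsq
  rw [one_div, ← Real.exp_log hN, ← Real.exp_neg, Real.exp_le_exp, div_le_iff₀ (by positivity)]
  nlinarith

theorem sub_le_sum_ite_of_forall_le {ι : Type*} [Fintype ι] [DecidableEq ι] {f : ι → ℝ} {B : ℝ}
    (h0 : ∀ i, 0 ≤ f i) (hB : ∀ i, f i ≤ B) {p : ι} (hp : ∀ i, f i ≤ f p) (a : ι) :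
    f p - f a ≤ ∑ i, if i ≠ a ∧ f a ≤ f i then B else 0 := by
  have h_terms : ∀ i ∈ univ, 0 ≤ if i ≠ a ∧ f a ≤ f i then B else 0 :=
    fun i _ ↦ by split_ifs <;> linarith [h0 i, hB i]
  by_cases hpa : p = a
  · simpa [hpa] using sum_nonneg h_terms
  · calc f p - f a ≤ B := by linarith [hB p, h0 a]
      _ = if p ≠ a ∧ f a ≤ f p then B else 0 := by simp [hpa, hp a]
      _ ≤ _ := single_le_sum h_terms (mem_univ p)

section Measure

variable {Ω : Type*} [MeasurableSpace Ω] {μ : Measure Ω}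

theorem measureReal_sum_nonpos_le {ι : Type*} {X : ι → Ω → ℝ} (h_indep : iIndepFun X μ)
    (h_meas : ∀ i, Measurable (X i)) (h_bdd : ∀ i ω, X i ω ∈ Set.Icc (-1 : ℝ) 1)
    (s : Finset ι) (h_mean : 0 ≤ ∑ i ∈ s, μ[X i]) :
    μ.real {ω | ∑ i ∈ s, X i ω ≤ 0} ≤ Real.exp (-(∑ i ∈ s, μ[X i]) ^ 2 / (2 * #s)) := by
  have := h_indep.isProbabilityMeasure
  have h_subG : ∀ i ∈ s, HasSubgaussianMGF (fun ω ↦ μ[X i] - X i ω) 1 μ := by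
    intro i _
    have h := (hasSubgaussianMGF_of_mem_Icc (h_meas i).aemeasurable (ae_of_all μ (h_bdd i))).neg
    convert h using 1
    · ext ω; simp
    · ext; norm_num
  have h_indep' : iIndepFun (fun i ω ↦ μ[X i] - X i ω) μ :=
    h_indep.comp (fun i y ↦ ∫ ω, X i ω ∂μ - y) fun _ ↦ measurable_const.sub measurable_id
  have h_event : {ω | ∑ i ∈ s, X i ω ≤ 0}
      = {ω | ∑ i ∈ s, μ[X i] ≤ ∑ i ∈ s, (μ[X i] - X i ω)} := by
    ext ω; simp [Finset.sum_sub_distrib]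
  rw [h_event]
  simpa using HasSubgaussianMGF.measure_sum_ge_le_of_iIndepFun h_indep' h_subG h_mean

theorem integral_ite_eq_measureReal_mul {α : Type*} [DecidableEq α] [MeasurableSpace α]
    [MeasurableSingletonClass α] {Z : Ω → α} (hZ : Measurable Z) {D : Measure α}
    (hlaw : μ.map Z = D) (c : α) (a : ℝ) :
    μ[fun ω ↦ if Z ω = c then a else 0] = D.real {c} * a := by
  have h : (fun ω ↦ if Z ω = c then a else 0)
      = fun ω ↦ ({c} : Set α).indicator (fun _ ↦ a) (Z ω) := by
    simp only [Set.indicator_apply, Set.mem_singleton_iff]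
  rw [h, ← integral_map hZ.aemeasurable, hlaw,
    integral_indicator_const _ (measurableSet_singleton c), smul_eq_mul]
  exact (stronglyMeasurable_const.indicator (measurableSet_singleton c)).aestronglyMeasurable

theorem measureReal_sum_ite_nonpos_le {α : Type*} [DecidableEq α] [MeasurableSpace α]
    [MeasurableSingletonClass α] {ctx : Ω → ℕ → α}
    (hmeas : ∀ t, Measurable fun ω ↦ ctx ω t) {T : ℕ} (hT : 1 ≤ T) {D : Measure α}
    (hlaw : ∀ t : Fin T, μ.map (fun ω ↦ ctx ω t) = D)
    (hindep : iIndepFun (fun (t : Fin T) ω ↦ ctx ω t) μ) (c : α) {d : ℕ → ℝ}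
    (hd : ∀ t, d t ∈ Set.Icc (-1 : ℝ) 1) {N : ℝ} (hN : 0 < N)
    (hgap : √(2 * Real.log N / T) ≤ D.real {c} * ((1 / T) * ∑ t ∈ range T, d t)) :
    μ.real {ω | ∑ t ∈ range T, (if ctx ω t = c then d t else 0) ≤ 0} ≤ 1 / N := by
  set X : Fin T → Ω → ℝ := fun t ω ↦ if ctx ω t = c then d t else 0 with hX
  have hT0 : (0 : ℝ) < T := by exact_mod_cast hT
  have h_mean : ∑ t, μ[X t] = T * (D.real {c} * ((1 / T) * ∑ t ∈ range T, d t)) := by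
    simp only [hX, integral_ite_eq_measureReal_mul (hmeas _) (hlaw _)]
    rw [← mul_sum, Fin.sum_univ_eq_sum_range d]
    field_simp
  have h_bdd : ∀ t ω, X t ω ∈ Set.Icc (-1 : ℝ) 1 := by
    intro t ω
    by_cases h : ctx ω t = c <;> simp [hX, h, hd]
  have h_ite : ∀ t : Fin T, Measurable fun x : α ↦ if x = c then d t else 0 :=
    fun _ ↦ Measurable.ite measurableSet_eq measurable_const measurable_const
  have h := measureReal_sum_nonpos_le (X := X) (hindep.comp _ h_ite)
    (fun t ↦ (h_ite t).comp (hmeas t)) h_bdd univ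
    (h_mean ▸ mul_nonneg hT0.le ((Real.sqrt_nonneg _).trans hgap))
  have h_event : {ω | ∑ t ∈ range T, (if ctx ω t = c then d t else 0) ≤ 0}
      = {ω | ∑ t, X t ω ≤ 0} := by
    ext ω
    simp only [hX, Set.mem_ofPred_eq,
      Fin.sum_univ_eq_sum_range fun t ↦ if ctx ω t = c then d t else 0]
  rw [h_mean, card_univ, Fintype.card_fin] at h
  rw [h_event]
  exact h.trans (exp_neg_sq_div_le_inv hT0 hN hgap)

/-- `f` need not be integrable (the hindsight policy is not assumed measurable): otherwise
`∫ f = 0` and the bound still holds since `g, h ≥ 0`. -/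
theorem integral_sub_integral_le_integral {f g h : Ω → ℝ} (hg : Integrable g μ)
    (hh : Integrable h μ) (hg0 : 0 ≤ g) (hh0 : 0 ≤ h)
    (hfg : ∀ ω, f ω - g ω ≤ h ω) :
    ∫ ω, f ω ∂μ - ∫ ω, g ω ∂μ ≤ ∫ ω, h ω ∂μ := by
  by_cases hf : Integrable f μ
  · rw [← integral_sub hf hg]
    exact integral_mono (hf.sub hg) hh hfg
  · rw [integral_undef hf]
    linarith [integral_nonneg (μ := μ) hg0, integral_nonneg (μ := μ) hh0]

theorem integral_sub_integral_le_card_mul [IsFiniteMeasure μ] {f g : Ω → ℝ}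
    (hg : Integrable g μ) (hg0 : 0 ≤ g) {ι : Type*} [Fintype ι] {P : ι → Ω → Prop}
    [∀ i, DecidablePred (P i)] (hP : ∀ i, MeasurableSet {ω | P i ω}) {B : ℝ} (hB : 0 ≤ B)
    {ε : ℝ} (hε : ∀ i, μ.real {ω | P i ω} ≤ ε)
    (hfg : ∀ ω, f ω - g ω ≤ ∑ i, if P i ω then B else 0) :
    ∫ ω, f ω ∂μ - ∫ ω, g ω ∂μ ≤ Fintype.card ι * B * ε := by
  have h_ite : ∀ i, (fun ω ↦ if P i ω then B else 0) = {ω | P i ω}.indicator fun _ ↦ B :=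
    fun i ↦ by ext ω; simp [Set.indicator_apply]
  have h_int : ∀ i, Integrable (fun ω ↦ if P i ω then B else 0) μ :=
    fun i ↦ h_ite i ▸ (integrable_const B).indicator (hP i)
  calc ∫ ω, f ω ∂μ - ∫ ω, g ω ∂μ ≤ ∫ ω, ∑ i, (if P i ω then B else 0) ∂μ :=
        integral_sub_integral_le_integral hg (integrable_finsetSum _ fun i _ ↦ h_int i) hg0
          (fun ω ↦ sum_nonneg fun i _ ↦ ite_nonneg hB le_rfl) hfg
    _ = ∑ i, μ.real {ω | P i ω} * B := by
        rw [integral_finsetSum _ fun i _ ↦ h_int i]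
        simp_rw [h_ite, integral_indicator_const _ (hP _), smul_eq_mul]
    _ ≤ ∑ _i : ι, ε * B := sum_le_sum fun i _ ↦ mul_le_mul_of_nonneg_right (hε i) hB
    _ = Fintype.card ι * B * ε := by rw [sum_const, card_univ, nsmul_eq_mul]; ring

end Measure

section HindsightReward

variable {ι α : Type*} [DecidableEq α] (rr : ι → ℕ → α → ℝ) (T : ℕ)

def hindsightReward (s : ℕ → α) (c : α) (j : ι) : ℝ :=
  ∑ t ∈ range T, if s t = c then rr j t c else 0

theorem sum_reward_eq_sum_hindsightReward [Fintype α] (π : α → ι) (s : ℕ → α) :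
    ∑ t ∈ range T, rr (π (s t)) t (s t) = ∑ c, hindsightReward rr T s c (π c) := by
  simp only [hindsightReward]
  rw [sum_comm]
  simp

theorem hindsightReward_sub_hindsightReward (s : ℕ → α) (c : α) (a i : ι) :
    hindsightReward rr T s c a - hindsightReward rr T s c i
      = ∑ t ∈ range T, if s t = c then rr a t c - rr i t c else 0 := by
  rw [hindsightReward, hindsightReward, ← sum_sub_distrib]
  refine sum_congr rfl fun t _ ↦ ?_
  split_ifs <;> simp

variable {rr T}

theorem hindsightReward_mem_Icc (hrr : ∀ i t c, rr i t c ∈ Set.Icc (0 : ℝ) 1) (s : ℕ → α)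
    (c : α) (j : ι) : hindsightReward rr T s c j ∈ Set.Icc (0 : ℝ) T := by
  have h_terms : ∀ t, (if s t = c then rr j t c else 0) ∈ Set.Icc (0 : ℝ) 1 := fun t ↦ by
    split_ifs
    exacts [hrr j t c, ⟨le_rfl, zero_le_one⟩]
  constructor
  · exact sum_nonneg fun t _ ↦ (h_terms t).1
  · simpa [hindsightReward] using sum_le_sum fun t (_ : t ∈ range T) ↦ (h_terms t).2

theorem sum_reward_sub_le_sum_ite [Fintype α] [Fintype ι] [DecidableEq ι]
    (hrr : ∀ i t c, rr i t c ∈ Set.Icc (0 : ℝ) 1) (πA πP : α → ι) (s : ℕ → α)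
    (hP : ∀ c j, hindsightReward rr T s c j ≤ hindsightReward rr T s c (πP c)) :
    ∑ t ∈ range T, rr (πP (s t)) t (s t) - ∑ t ∈ range T, rr (πA (s t)) t (s t)
      ≤ ∑ p : α × ι, if p.2 ≠ πA p.1 ∧
          hindsightReward rr T s p.1 (πA p.1) ≤ hindsightReward rr T s p.1 p.2 then (T : ℝ)
        else 0 := by
  rw [sum_reward_eq_sum_hindsightReward, sum_reward_eq_sum_hindsightReward, ← sum_sub_distrib,
    Fintype.sum_prod_type]
  exact sum_le_sum fun c _ ↦
    sub_le_sum_ite_of_forall_le (fun j ↦ (hindsightReward_mem_Icc hrr s c j).1)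
      (fun j ↦ (hindsightReward_mem_Icc hrr s c j).2) (hP c) (πA c)

variable {Ω : Type*} [MeasurableSpace Ω] [MeasurableSpace α] [MeasurableSingletonClass α]
  {ctx : Ω → ℕ → α}

theorem measurable_hindsightReward (hmeas : ∀ t, Measurable fun ω ↦ ctx ω t) (c : α) (j : ι) :
    Measurable fun ω ↦ hindsightReward rr T (ctx ω) c j :=
  Finset.measurable_sum _ fun t _ ↦
    Measurable.ite (hmeas t (measurableSet_singleton c)) measurable_const measurable_const

theorem measurableSet_hindsightReward_le (hmeas : ∀ t, Measurable fun ω ↦ ctx ω t) (c : α)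
    (a i : ι) :
    MeasurableSet {ω | hindsightReward rr T (ctx ω) c a ≤ hindsightReward rr T (ctx ω) c i} :=
  measurableSet_le (measurable_hindsightReward hmeas c a) (measurable_hindsightReward hmeas c i)

theorem integrable_sum_reward [Fintype α] {μ : Measure Ω} [IsFiniteMeasure μ]
    (hrr : ∀ i t c, rr i t c ∈ Set.Icc (0 : ℝ) 1) (hmeas : ∀ t, Measurable fun ω ↦ ctx ω t)
    (π : α → ι) : Integrable (fun ω ↦ ∑ t ∈ range T, rr (π (ctx ω t)) t (ctx ω t)) μ := by
  simp_rw [sum_reward_eq_sum_hindsightReward]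
  exact integrable_finsetSum _ fun c _ ↦
    Integrable.of_mem_Icc 0 T (measurable_hindsightReward hmeas c (π c)).aemeasurable
      (ae_of_all μ fun ω ↦ hindsightReward_mem_Icc hrr (ctx ω) c (π c))

theorem measureReal_hindsightReward_le_le {μ : Measure Ω}
    (hrr : ∀ i t c, rr i t c ∈ Set.Icc (0 : ℝ) 1) (hmeas : ∀ t, Measurable fun ω ↦ ctx ω t)
    (hT : 1 ≤ T) {D : Measure α} (hlaw : ∀ t : Fin T, μ.map (fun ω ↦ ctx ω t) = D)
    (hindep : iIndepFun (fun (t : Fin T) ω ↦ ctx ω t) μ) (c : α) (a i : ι) {N : ℝ} (hN : 0 < N)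
    (hgap : √(2 * Real.log N / T) ≤ D.real {c} * ((1 / T) * ∑ t ∈ range T, (rr a t c - rr i t c))) :
    μ.real {ω | hindsightReward rr T (ctx ω) c a ≤ hindsightReward rr T (ctx ω) c i} ≤ 1 / N := by
  have h_event : {ω | hindsightReward rr T (ctx ω) c a ≤ hindsightReward rr T (ctx ω) c i}
      = {ω | ∑ t ∈ range T, (if ctx ω t = c then rr a t c - rr i t c else 0) ≤ 0} := by
    ext ω
    rw [Set.mem_ofPred_eq, Set.mem_ofPred_eq, ← hindsightReward_sub_hindsightReward, sub_nonpos]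
  have hd : ∀ t, rr a t c - rr i t c ∈ Set.Icc (-1 : ℝ) 1 := fun t ↦ by
    obtain ⟨ha0, ha1⟩ := hrr a t c
    obtain ⟨hi0, hi1⟩ := hrr i t c
    constructor <;> linarith
  rw [h_event]
  exact measureReal_sum_ite_nonpos_le hmeas hT hlaw hindep c hd hN hgap

end HindsightReward

/-- when every context occurs often enough relative to its gap, the ex-ante
and ex-post benchmarks nearly coincide.  With rewards `r_{i,t}(c) ∈ [0,1]` fixed and
contexts i.i.d. from `D`, if for every context `c` and every arm `i ≠ π_Ante(c)` we have
`D(c)·(1/T)·∑_t (r_{π_Ante(c),t}(c) − r_{i,t}(c)) ≥ √(2 log(T·C·K)/T)` (i.e.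
`M ≥ √(2 log(TCK)/T)`), then the expected total reward of the hindsight-optimal
stationary policy exceeds that of the ex-ante optimal stationary policy by at most 1;
equivalently, the expected ex-ante and ex-post regrets of any algorithm differ by at
most 1. -/
theorem exante_expost_regret_close
    (K C T : ℕ) (hK : 2 ≤ K) (hC : 1 ≤ C) (hT : 1 ≤ T)
    (Ω : Type) (_ : MeasurableSpace Ω) (μ : Measure Ω)
    (D : Measure (Fin C))
    (rr : Fin K → ℕ → Fin C → ℝ)
    (hrr : ∀ i t c, rr i t c ∈ Set.Icc (0:ℝ) 1)
    (ctx : Ω → ℕ → Fin C)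
    (hmeas : ∀ t, Measurable (fun ω => ctx ω t))
    (hlaw : ∀ t : Fin T, Measure.map (fun ω => ctx ω (t : ℕ)) μ = D)
    (hindep : iIndepFun (fun (t : Fin T) ω => ctx ω (t : ℕ)) μ)
    (πA : Fin C → Fin K)
    -- M = min_c D(c)·Δ_c ≥ √(2 log(T·C·K)/T)
    (hM : ∀ (c : Fin C) (i : Fin K), i ≠ πA c →
      Real.sqrt (2 * Real.log ((T : ℝ) * C * K) / T) ≤
        (D {c}).toReal *
          ((1 / (T : ℝ)) * ∑ t ∈ Finset.range T, (rr (πA c) t c - rr i t c)))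
    (πP : Ω → Fin C → Fin K)
    -- π_Post is the best stationary policy in hindsight
    (hP : ∀ ω (c : Fin C) (j : Fin K),
      ∑ t ∈ Finset.range T, (if ctx ω t = c then rr j t c else 0)
        ≤ ∑ t ∈ Finset.range T, (if ctx ω t = c then rr (πP ω c) t c else 0)) :
    (∫ ω, (∑ t ∈ Finset.range T, rr (πP ω (ctx ω t)) t (ctx ω t)) ∂μ)
      - (∫ ω, (∑ t ∈ Finset.range T, rr (πA (ctx ω t)) t (ctx ω t)) ∂μ) ≤ 1 := by
  have := hindep.isProbabilityMeasure
  have hN : (0 : ℝ) < T * C * K := by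
    exact_mod_cast Nat.mul_pos (Nat.mul_pos hT hC) (by omega : 0 < K)
  set bad : Fin C × Fin K → Ω → Prop := fun p ω ↦ p.2 ≠ πA p.1 ∧
    hindsightReward rr T (ctx ω) p.1 (πA p.1) ≤ hindsightReward rr T (ctx ω) p.1 p.2
  have h_bad : ∀ p, μ.real {ω | bad p ω} ≤ 1 / (T * C * K) := by
    rintro ⟨c, i⟩
    by_cases hi : i = πA c
    · simp only [bad, hi, ne_eq, not_true_eq_false, false_and, Set.ofPred_false, measureReal_empty]
      positivity
    · exact (measureReal_mono fun ω hω ↦ hω.2).trans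
        (measureReal_hindsightReward_le_le hrr hmeas hT hlaw hindep c (πA c) i hN (hM c i hi))
  refine (integral_sub_integral_le_card_mul (P := bad) (integrable_sum_reward hrr hmeas πA)
    (fun ω ↦ sum_nonneg fun t _ ↦ (hrr _ t _).1)
    (fun p ↦ (MeasurableSet.const _).inter (measurableSet_hindsightReward_le hmeas _ _ _))
    T.cast_nonneg h_bad fun ω ↦ sum_reward_sub_le_sum_ite hrr πA (πP ω) (ctx ω) (hP ω)).trans_eq ?_
  rw [Fintype.card_prod, Fintype.card_fin, Fintype.card_fin]
  push_cast
  field_simp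
end
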